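/- arXiv:2307.04908 — 10 statements merged into one kernel-verified Lean document; each statement's English description precedes it below -/
import Mathlib

section
/- For an integer n ≥ 1, the element 2n + √(4n²-1) is the fundamental unit of the real quadratic field ℚ(√(4n²-1)) when 4n²-1 is squarefree, and it is totally positive. -/
lemma aux_zpow {d : ℤ} (F : Pell.Solution₁ d →* ℝ) (ε : Pell.Solution₁ d) (k : ℤ) :
    F (ε ^ k) = (F ε) ^ k :=
  map_zpow' F (fun x => eq_inv_of_mul_eq_one_left
    (by rw [← map_mul, inv_mul_cancel, map_one])) ε k

/-- For `n ≥ 1` with `p = 4n²-1` squarefree, the element `ε = 2n + √(4n²-1)` is the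
fundamental unit of `ℚ(√(4n²-1))` (whose ring of integers is `ℤ[√p]` since `p ≡ 3 mod 4`):
`ε` is a unit (indeed `ε · (2n - √p) = 1`), it is totally positive (both `ε` and its
conjugate `2n - √p` are positive), `ε > 1`, and every unit of `ℤ[√p]` is `±ε^k` for
some `k : ℤ`. -/
theorem stmt_1 (n : ℕ) (hn : 1 ≤ n) (hsf : Squarefree (4*n^2 - 1))
    (S : ℝ) (hS : S = Real.sqrt ((4*n^2 - 1 : ℕ) : ℝ)) :
    (2*(n:ℝ) + S) * (2*(n:ℝ) - S) = 1 ∧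
    0 < 2*(n:ℝ) + S ∧
    0 < 2*(n:ℝ) - S ∧
    1 < 2*(n:ℝ) + S ∧
    ∀ x y : ℤ, (∃ u v : ℤ, ((x:ℝ) + (y:ℝ)*S) * ((u:ℝ) + (v:ℝ)*S) = 1) →
      ∃ k : ℤ, (x:ℝ) + (y:ℝ)*S = (2*(n:ℝ) + S)^k ∨
               (x:ℝ) + (y:ℝ)*S = -((2*(n:ℝ) + S)^k) := by
  have h4 : (1:ℕ) ≤ 4*n^2 := by nlinarith
  have hnR : (1:ℝ) ≤ (n:ℝ) := by exact_mod_cast hn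
  have hnZ : (1:ℤ) ≤ (n:ℤ) := by exact_mod_cast hn
  have hpR : ((4*n^2-1 : ℕ) : ℝ) = 4*(n:ℝ)^2 - 1 := by
    rw [Nat.cast_sub h4]; push_cast; ring
  have hS0 : 0 ≤ S := hS ▸ Real.sqrt_nonneg _
  have hS2 : S^2 = 4*(n:ℝ)^2 - 1 := by
    rw [hS, Real.sq_sqrt (by positivity)]; exact hpR
  refine ⟨by linear_combination (-1:ℝ) * hS2, by linarith, by nlinarith, by linarith, ?_⟩
  intro x y ⟨u, v, huv⟩
  set d : ℤ := ((4*n^2-1:ℕ):ℤ) with hddef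
  have hd : d = 4*(n:ℤ)^2 - 1 := by rw [hddef, Nat.cast_sub h4]; push_cast; ring
  have hd0 : (0:ℤ) ≤ d := by rw [hd]; nlinarith
  have hSd : S^2 = ((d:ℤ):ℝ) := by rw [hS2, hd]; push_cast; ring
  have hsq : Real.sqrt ((d:ℤ):ℝ) = S := by rw [hS, hddef]; norm_cast
  -- d is not a square
  have hnonsq : ∀ m:ℤ, d ≠ m*m := by
    intro m hm
    have hk0 : 0 ≤ |m| := abs_nonneg m
    have hkk : |m| * |m| = 4*(n:ℤ)^2 - 1 := by rw [abs_mul_abs_self, ← hm, hd]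
    have h1 : 2*(n:ℤ) - 1 < |m| := by nlinarith
    have h2 : 2*(n:ℤ) ≤ |m| := by have := Int.add_one_le_iff.mpr h1; linarith
    nlinarith
  -- transfer the unit equation into ℤ√d
  have hinj := Zsqrtd.toReal_injective hd0 hnonsq
  have hmul1 : (⟨x,y⟩ * ⟨u,v⟩ : ℤ√d) = 1 := by
    apply hinj
    rw [map_mul, map_one]
    simpa [Zsqrtd.toReal_apply, hsq] using huv
  have hnorm : (⟨x,y⟩ : ℤ√d).norm * (⟨u,v⟩ : ℤ√d).norm = 1 := by
    rw [← Zsqrtd.norm_mul, hmul1, Zsqrtd.norm_one]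
  have hunit : (⟨x,y⟩ : ℤ√d).norm = 1 ∨ (⟨x,y⟩ : ℤ√d).norm = -1 :=
    Int.isUnit_iff.mp (IsUnit.of_mul_eq_one _ hnorm)
  have hnormdef : (⟨x,y⟩ : ℤ√d).norm = x*x - d*y*y := by
    simp [Zsqrtd.norm_def]
  rcases hunit with hcase | hcase
  · -- norm 1 : Pell solution
    have hsol : x^2 - d*y^2 = 1 := by rw [hnormdef] at hcase; linear_combination hcase
    have hεsol : (2*(n:ℤ))^2 - d*(1:ℤ)^2 = 1 := by rw [hd]; ring
    set ε : Pell.Solution₁ d := Pell.Solution₁.mk (2*n) 1 hεsol with hεdef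
    have hfund : Pell.IsFundamental ε := by
      refine ⟨by simp [hεdef, Pell.Solution₁.x_mk]; linarith, by simp [hεdef, Pell.Solution₁.y_mk], ?_⟩
      intro b hb
      have hy := Pell.Solution₁.y_ne_zero_of_one_lt_x hb
      have hy2 : 1 ≤ b.y^2 := by rcases (Ne.lt_or_gt hy) with h|h <;> nlinarith
      have hbp := b.prop
      have hxm : ε.x = 2*(n:ℤ) := by simp [hεdef, Pell.Solution₁.x_mk]
      rw [hxm]
      nlinarith [mul_le_mul_of_nonneg_left hy2 hd0, hd]
    set a : Pell.Solution₁ d := Pell.Solution₁.mk x y hsol with hadef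
    obtain ⟨k, hk⟩ := hfund.eq_zpow_or_neg_zpow a
    -- the real embedding as a monoid hom
    let F : Pell.Solution₁ d →* ℝ :=
      { toFun := fun b => (b.x:ℝ) + (b.y:ℝ)*S
        map_one' := by simp
        map_mul' := by
          intro a b
          simp only [Pell.Solution₁.x_mul, Pell.Solution₁.y_mul]
          push_cast
          linear_combination (-((a.y:ℝ)*(b.y:ℝ))) * hSd }
    have hFa : F a = (x:ℝ) + (y:ℝ)*S := by simp [F, hadef]
    have hFε : F ε = 2*(n:ℝ) + S := by show ((2*(n:ℤ) : ℤ):ℝ) + ((1:ℤ):ℝ)*S = 2*(n:ℝ) + S; push_cast; ring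
    have hFneg : ∀ b : Pell.Solution₁ d, F (-b) = -(F b) := by
      intro b; simp [F, Pell.Solution₁.x_neg, Pell.Solution₁.y_neg]; ring
    refine ⟨k, ?_⟩
    rcases hk with hk | hk
    · left; rw [← hFε, ← aux_zpow F ε k, ← hk, hFa]
    · right; rw [← hFε, ← aux_zpow F ε k, ← hFneg, ← hk, hFa]
  · -- norm -1 : impossible mod 4
    exfalso
    rw [hnormdef] at hcase
    have hz := congrArg (fun t : ℤ => (t : ZMod 4)) hcase
    push_cast [hd] at hz
    have h40 : (4 : ZMod 4) = 0 := by decide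
    have hz' : (x:ZMod 4)*(x:ZMod 4) + (y:ZMod 4)*(y:ZMod 4) = 3 := by
      linear_combination hz + ((n:ZMod 4)^2*(y:ZMod 4)*(y:ZMod 4) - 1) * h40
    have : ∀ a b : ZMod 4, a*a + b*b ≠ 3 := by decide
    exact this _ _ hz'
end

section
/- Let F be a totally real number field. There exists a constant c (depending on F) such that every indecomposable element α ∈ O_F^+ satisfies N_{F/ℚ}(α) ≤ c. Consequently, there are only finitely many indecomposable elements of O_F^+ up to multiplication by totally positive units. -/
open NumberField

/-- Totally positive algebraic integer of a number field. -/
def TotallyPositive (F : Type*) [Field F] (α : 𝓞 F) : Prop :=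
  ∀ φ : F →+* ℝ, 0 < φ ((α : F))

/-- Indecomposable totally positive algebraic integer. -/
def Indecomposable (F : Type*) [Field F] (α : 𝓞 F) : Prop :=
  TotallyPositive F α ∧ ¬∃ β γ : 𝓞 F, TotallyPositive F β ∧ TotallyPositive F γ ∧ α = β + γ

open NumberField.InfinitePlace NumberField.mixedEmbedding NNReal

lemma exists_decomp {F : Type*} [Field F] [NumberField F]
    (htr : ∀ v : InfinitePlace F, v.IsReal)
    {B : ℕ} (hB : minkowskiBound F 1 < (convexBodyLTFactor F) * B)
    (α : 𝓞 F) (hα : TotallyPositive F α)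
    (hn : ((B : ℝ))^2 < |((Algebra.norm ℚ ((α : F)) : ℚ) : ℝ)|) :
    ∃ β γ : 𝓞 F, TotallyPositive F β ∧ TotallyPositive F γ ∧ α = β + γ := by
  classical
  -- positivity of places of α
  have hαpos : ∀ φ : F →+* ℝ, 0 < φ (α : F) := hα
  have hwpos : ∀ w : InfinitePlace F, 0 ≤ w ((α : F)) := fun w => (w.1.nonneg _)
  set f : InfinitePlace F → ℝ≥0 := fun w => Real.toNNReal (Real.sqrt (w ((α : F)))) with hf
  have hmult : ∀ w : InfinitePlace F, mult w = 1 := by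
    intro w; simp [mult, htr w]
  have hprod_sq : (∏ w : InfinitePlace F, Real.sqrt (w ((α : F)))) ^ 2
      = |((Algebra.norm ℚ ((α : F)) : ℚ) : ℝ)| := by
    rw [← Finset.prod_pow]
    have : ∀ w : InfinitePlace F, (Real.sqrt (w ((α : F))))^2 = w ((α : F)) := fun w =>
      Real.sq_sqrt (hwpos w)
    rw [Finset.prod_congr rfl fun w _ => this w]
    have := prod_eq_abs_norm ((α : F))
    simp_rw [hmult, pow_one] at this
    rw [this]
    push_cast
    rfl
  have hBlt : (B : ℝ) < ∏ w : InfinitePlace F, Real.sqrt (w ((α : F))) := by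
    have h1 : (0:ℝ) ≤ (B:ℝ) := Nat.cast_nonneg _
    have h2 : (0:ℝ) ≤ ∏ w : InfinitePlace F, Real.sqrt (w ((α : F))) :=
      Finset.prod_nonneg fun w _ => Real.sqrt_nonneg _
    nlinarith [hprod_sq, hn]
  -- volume bound
  have hvol : minkowskiBound F 1 < MeasureTheory.volume (convexBodyLT F f) := by
    rw [convexBodyLT_volume]
    have hle : (B : ℝ≥0) ≤ ∏ w : InfinitePlace F, (f w) ^ (mult w) := by
      rw [← NNReal.coe_le_coe, NNReal.coe_prod]
      simp_rw [NNReal.coe_pow, hmult, pow_one, hf, Real.coe_toNNReal _ (Real.sqrt_nonneg _)]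
      exact_mod_cast hBlt.le
    refine lt_of_lt_of_le hB (mul_le_mul_right ?_ _)
    have hcoe : ((∏ w, (f w) ^ (mult w) : ℝ≥0) : ENNReal)
        = ∏ w, ((f w : ENNReal)) ^ (mult w) := by
      rw [ENNReal.coe_finset_prod]; simp
    exact_mod_cast hle
  obtain ⟨β, hβ0, hβlt⟩ := exists_ne_zero_mem_ringOfIntegers_lt F hvol
  have hβF : ((β : F)) ≠ 0 := RingOfIntegers.coe_ne_zero_iff.mpr hβ0
  -- key pointwise bound
  have key : ∀ φ : F →+* ℝ, (φ (β : F))^2 < φ (α : F) := by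
    intro φ
    set ψ : F →+* ℂ := Complex.ofRealHom.comp φ with hψ
    have hw := hβlt (InfinitePlace.mk ψ)
    rw [InfinitePlace.apply] at hw
    have hwa : (InfinitePlace.mk ψ) ((α : F)) = φ ((α : F)) := by
      rw [InfinitePlace.apply]
      simp [hψ, Complex.norm_real, abs_of_pos (hαpos φ)]
    have hfle : ((f (InfinitePlace.mk ψ)) : ℝ) = Real.sqrt (φ ((α : F))) := by
      rw [hf]; simp [hwa, Real.coe_toNNReal _ (Real.sqrt_nonneg _)]
    have habs : |φ ((β : F))| < Real.sqrt (φ ((α : F))) := by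
      have : ‖ψ ((β : F))‖ = |φ ((β : F))| := by simp [hψ]
      rw [this] at hw
      rw [← hfle]; exact hw
    have := abs_nonneg (φ ((β : F)))
    nlinarith [Real.sq_sqrt (hαpos φ).le, sq_abs (φ ((β : F)))]
  refine ⟨β^2, α - β^2, ?_, ?_, by ring⟩
  · intro φ
    have : φ ((β : F)) ≠ 0 := fun h => hβF (by
      have := φ.injective; exact this (by rw [h, map_zero]))
    push_cast
    rw [map_pow]
    positivity
  · intro φ
    have h := key φ
    push_cast
    rw [map_sub, map_pow]
    linarith

/-- Let `F` be a totally real number field. There is a constant `c` (depending on `F`)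
such that every indecomposable `α ∈ 𝓞 F⁺` has `N_{F/ℚ}(α) ≤ c`. Consequently there are
only finitely many indecomposable elements of `𝓞 F⁺` up to multiplication by totally
positive units. -/
theorem stmt_6 (F : Type*) [Field F] [NumberField F]
    (htr : ∀ v : InfinitePlace F, v.IsReal) :
    (∃ c : ℝ, ∀ α : 𝓞 F, Indecomposable F α → ((Algebra.norm ℚ ((α : F)) : ℚ) : ℝ) ≤ c) ∧
    (∃ S : Finset (𝓞 F), ∀ α : 𝓞 F, Indecomposable F α →
      ∃ s ∈ S, ∃ u : (𝓞 F)ˣ, TotallyPositive F (u : 𝓞 F) ∧ α = (u : 𝓞 F) * s) := by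
  classical
  obtain ⟨B, hB⟩ : ∃ B : ℕ, minkowskiBound F 1 < (convexBodyLTFactor F) * B := by
    conv => congr; ext; rw [mul_comm]
    exact ENNReal.exists_nat_mul_gt (ENNReal.coe_ne_zero.mpr (convexBodyLTFactor_ne_zero F))
      (ne_of_lt (minkowskiBound_lt_top F 1))
  have normbdd : ∀ α : 𝓞 F, Indecomposable F α →
      |((Algebra.norm ℚ ((α : F)) : ℚ) : ℝ)| ≤ (B : ℝ)^2 := by
    intro α ⟨htp, hdec⟩
    by_contra h
    exact hdec (exists_decomp htr hB α htp (lt_of_not_ge h))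
  constructor
  · exact ⟨(B : ℝ)^2, fun α hα => le_trans (le_abs_self _) (normbdd α hα)⟩
  -- part 2
  have hRfin : Finite (F →+* ℝ) := by
    refine Finite.of_injective (fun φ : F →+* ℝ => (Complex.ofRealHom.comp φ : F →+* ℂ)) ?_
    intro φ₁ φ₂ h
    exact RingHom.ext fun x => Complex.ofReal_injective (RingHom.congr_fun h x)
  set sgn : (𝓞 F)ˣ → ((F →+* ℝ) → Bool) :=
    fun v φ => decide (0 < φ (((v : 𝓞 F) : F))) with hsgn
  set gen : Ideal (𝓞 F) → 𝓞 F :=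
    fun I => if h : ∃ a : 𝓞 F, I = Ideal.span {a} then h.choose else 0 with hgen
  set pick : ((F →+* ℝ) → Bool) → (𝓞 F)ˣ :=
    fun s => if h : ∃ v : (𝓞 F)ˣ, sgn v = s then h.choose else 1 with hpick
  have hfinI : {I : Ideal (𝓞 F) | Ideal.absNorm I ≤ B^2}.Finite :=
    Ideal.finite_setOf_absNorm_le _
  set Sset : Set (𝓞 F) :=
    (fun p : ((F →+* ℝ) → Bool) × Ideal (𝓞 F) => ((pick p.1 : 𝓞 F) * gen p.2)) ''
      (Set.univ ×ˢ {I | Ideal.absNorm I ≤ B^2}) with hSset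
  have hSfin : Sset.Finite := (Set.Finite.prod (Set.finite_univ) hfinI).image _
  refine ⟨hSfin.toFinset, fun α hα => ?_⟩
  have hnorm := normbdd α hα
  have hIle : Ideal.absNorm (Ideal.span {α}) ≤ B^2 := by
    rw [Ideal.absNorm_span_singleton]
    have h1 : ((Algebra.norm ℤ α : ℚ)) = Algebra.norm ℚ ((α : F)) := Algebra.coe_norm_int α
    have h2 : |(Algebra.norm ℤ α : ℝ)| ≤ ((B^2 : ℕ) : ℝ) := by
      push_cast
      rw [show ((Algebra.norm ℤ α : ℝ)) = ((Algebra.norm ℚ ((α : F)) : ℚ) : ℝ) by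
        exact_mod_cast congrArg (fun q : ℚ => (q : ℝ)) h1]
      exact_mod_cast hnorm
    have h3 : |Algebra.norm ℤ α| ≤ ((B^2 : ℕ) : ℤ) := by exact_mod_cast h2
    have h4 : ((Algebra.norm ℤ α).natAbs : ℤ) ≤ ((B^2 : ℕ) : ℤ) := by
      rw [← Int.abs_eq_natAbs]; exact h3
    exact_mod_cast h4
  have hprinc : ∃ a : 𝓞 F, Ideal.span {α} = Ideal.span {a} := ⟨α, rfl⟩
  have hgenspec : Ideal.span {α} = Ideal.span {gen (Ideal.span {α})} := by
    rw [hgen]; simp only [dif_pos hprinc]; exact hprinc.choose_spec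
  obtain ⟨u, hu⟩ := Ideal.span_singleton_eq_span_singleton.mp hgenspec
  -- α * u = gen ..., so α = u⁻¹ * gen
  set v : (𝓞 F)ˣ := u⁻¹ with hv
  have hαeq : α = (v : 𝓞 F) * gen (Ideal.span {α}) := by
    rw [← hu, hv]
    rw [mul_comm α (u : 𝓞 F), ← mul_assoc]
    simp
  have hpex : ∃ v' : (𝓞 F)ˣ, sgn v' = sgn v := ⟨v, rfl⟩
  set t : (𝓞 F)ˣ := pick (sgn v) with ht
  have htsgn : sgn t = sgn v := by
    rw [ht, hpick]; simp only [dif_pos hpex]; exact hpex.choose_spec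
  have hsigniff : ∀ φ : F →+* ℝ, (0 < φ (((t : 𝓞 F) : F)) ↔ 0 < φ (((v : 𝓞 F) : F))) := by
    intro φ
    have := congrFun htsgn φ
    rw [hsgn] at this
    exact decide_eq_decide.mp this
  have hunitne : ∀ (w : (𝓞 F)ˣ) (φ : F →+* ℝ), φ (((w : 𝓞 F) : F)) ≠ 0 := by
    intro w φ h
    have hw : ((w : 𝓞 F) : F) ≠ 0 := by
      simp only [ne_eq, RingOfIntegers.coe_eq_zero_iff, ZeroMemClass.coe_eq_zero]
      exact w.ne_zero
    exact hw (φ.injective (by rw [h, map_zero]))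
  have hinv : ∀ (w : (𝓞 F)ˣ) (φ : F →+* ℝ),
      φ (((w : 𝓞 F) : F)) * φ ((((w⁻¹ : (𝓞 F)ˣ) : 𝓞 F) : F)) = 1 := by
    intro w φ
    rw [← map_mul]
    have : ((w : 𝓞 F) : F) * (((w⁻¹ : (𝓞 F)ˣ) : 𝓞 F) : F) = 1 := by
      have := w.mul_inv
      exact_mod_cast congrArg (fun x : 𝓞 F => (x : F)) this
    rw [this, map_one]
  refine ⟨(t : 𝓞 F) * gen (Ideal.span {α}), ?_, v * t⁻¹, ?_, ?_⟩
  · rw [Set.Finite.mem_toFinset, hSset]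
    exact ⟨(sgn v, Ideal.span {α}), ⟨Set.mem_univ _, hIle⟩, rfl⟩
  · intro φ
    have hcoe : ((((v * t⁻¹ : (𝓞 F)ˣ) : 𝓞 F)) : F)
        = ((v : 𝓞 F) : F) * ((((t⁻¹ : (𝓞 F)ˣ) : 𝓞 F)) : F) := by push_cast; ring
    rw [hcoe, map_mul]
    have h1 := hinv t φ
    have h2 := hsigniff φ
    have h3 := hunitne v φ
    have h4 := hunitne t φ
    rcases lt_trichotomy (φ (((v : 𝓞 F) : F))) 0 with hneg | hzero | hpos
    · have htneg : φ (((t : 𝓞 F) : F)) < 0 :=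
        lt_of_le_of_ne (not_lt.mp (fun hc => absurd (h2.mp hc) (not_lt.mpr hneg.le))) h4
      nlinarith
    · exact absurd hzero h3
    · have htpos : 0 < φ (((t : 𝓞 F) : F)) := h2.mpr hpos
      nlinarith
  · conv_lhs => rw [hαeq]
    rw [Units.val_mul, mul_assoc, ← mul_assoc (((t⁻¹ : (𝓞 F)ˣ)) : 𝓞 F) ((t : 𝓞 F)) _,
      Units.inv_mul, one_mul]
end

section
/- Let α be an irrational real number, and let s/t (with s ∈ ℤ, t ∈ ℕ, gcd(s,t)=1) be a best upper bound of the second kind of α, i.e., 0 < s − tα and s − tα < s' − t'α for all pairs (s',t') ≠ (s,t) with t' ≤ t and s' − t'α > 0. Then s/t > α and s/t is an upper semiconvergent of α. -/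
set_option maxHeartbeats 1000000 in
/-- Let `α` be irrational with continued fraction `[u_0; u_1, u_2, …]` (partial quotients
from the Gauss map iteration), convergents `s_i/t_i` (with `s_{-1}=1, t_{-1}=0, s_{-2}=0,
t_{-2}=1`). Let `a/b` (with `a ∈ ℤ`, `b ∈ ℕ`, `b ≥ 1`, `gcd(a,b)=1`) be a best upper bound
of the second kind of `α`: `0 < a − bα` and `a − bα < a' − b'α` for all `(a',b') ≠ (a,b)`
with `1 ≤ b' ≤ b` and `a' − b'α > 0`. Then `a/b > α` and `a/b` is an upper semiconvergent
of `α`: there are `i ≥ −1` odd and `0 ≤ l ≤ u_{i+2} − 1` with `a = s_i + l·s_{i+1}`,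
`b = t_i + l·t_{i+1}`. -/
theorem stmt_9 (α : ℝ) (hα : Irrational α)
    (x : ℕ → ℝ) (hx0 : x 0 = α) (hxr : ∀ i : ℕ, x (i+1) = 1 / Int.fract (x i))
    (u : ℕ → ℤ) (hu : ∀ i : ℕ, u i = ⌊x i⌋)
    (s t : ℤ → ℤ)
    (hs1 : s (-1) = 1) (ht1 : t (-1) = 0) (hs2 : s (-2) = 0) (ht2 : t (-2) = 1)
    (hsr : ∀ i : ℕ, s (i : ℤ) = u i * s ((i : ℤ) - 1) + s ((i : ℤ) - 2))
    (htr : ∀ i : ℕ, t (i : ℤ) = u i * t ((i : ℤ) - 1) + t ((i : ℤ) - 2))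
    (a : ℤ) (b : ℕ) (hb : 1 ≤ b) (hcop : a.gcd (b : ℤ) = 1)
    (hpos : 0 < (a : ℝ) - (b : ℝ) * α)
    (hbest : ∀ (a' : ℤ) (b' : ℕ), 1 ≤ b' → b' ≤ b → (a', b') ≠ (a, b) →
      0 < (a' : ℝ) - (b' : ℝ) * α → (a : ℝ) - (b : ℝ) * α < (a' : ℝ) - (b' : ℝ) * α) :
    α < (a : ℝ) / (b : ℝ) ∧
    ∃ i : ℤ, -1 ≤ i ∧ Odd i ∧ ∃ l : ℤ, 0 ≤ l ∧ l ≤ u (i + 2).toNat - 1 ∧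
      a = s i + l * s (i + 1) ∧ (b : ℤ) = t i + l * t (i + 1) := by
  have hbR : (1:ℝ) ≤ (b:ℝ) := by exact_mod_cast hb
  constructor
  · rw [lt_div_iff₀ (by linarith)]
    linarith
  -- basic facts about the Gauss iteration
  have hirr : ∀ n, Irrational (x n) := by
    intro n
    induction n with
    | zero => rwa [hx0]
    | succ n ih =>
      rw [hxr]
      have h1 : Irrational (Int.fract (x n)) := by
        rw [Int.fract]; exact Irrational.sub_intCast ih _
      simpa [one_div] using h1.inv
  have hfrac : ∀ n, 0 < Int.fract (x n) := by
    intro n; rw [Int.fract_pos]; exact (hirr n).ne_int _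
  have hfrac1 : ∀ n, Int.fract (x n) < 1 := fun n => Int.fract_lt_one _
  have hu1 : ∀ n : ℕ, 1 ≤ u (n+1) := by
    intro n
    rw [hu]
    have : 1 < x (n+1) := by
      rw [hxr]; exact one_lt_one_div (hfrac n) (hfrac1 n)
    exact Int.le_floor.2 (by exact_mod_cast this.le)
  -- ℕ-indexed convergents
  obtain ⟨P, hPdef⟩ : ∃ P : ℕ → ℤ, ∀ n, P n = s ((n:ℤ) - 1) := ⟨_, fun _ => rfl⟩
  obtain ⟨Q, hQdef⟩ : ∃ Q : ℕ → ℤ, ∀ n, Q n = t ((n:ℤ) - 1) := ⟨_, fun _ => rfl⟩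
  have hP0 : P 0 = 1 := by simp [hPdef, hs1]
  have hQ0 : Q 0 = 0 := by simp [hQdef, ht1]
  have hP1 : P 1 = u 0 := by
    have h := hsr 0
    norm_num at h
    simp [hPdef, h, hs1, hs2]
  have hQ1 : Q 1 = 1 := by
    have h := htr 0
    norm_num at h
    simp [hQdef, h, ht1, ht2]
  have hPrec : ∀ n : ℕ, P (n+2) = u (n+1) * P (n+1) + P n := by
    intro n
    have h := hsr (n+1)
    have e1 : ((n:ℤ)+2)-1 = (n:ℤ)+1 := by ring
    have e2 : ((n:ℤ)+1)-1 = (n:ℤ) := by ring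
    have e3 : ((n:ℤ)+1)-2 = (n:ℤ)-1 := by ring
    rw [hPdef, hPdef, hPdef]
    push_cast at h ⊢
    rw [e2, e3] at h
    rw [e1, e2]
    exact h
  have hQrec : ∀ n : ℕ, Q (n+2) = u (n+1) * Q (n+1) + Q n := by
    intro n
    have h := htr (n+1)
    have e1 : ((n:ℤ)+2)-1 = (n:ℤ)+1 := by ring
    have e2 : ((n:ℤ)+1)-1 = (n:ℤ) := by ring
    have e3 : ((n:ℤ)+1)-2 = (n:ℤ)-1 := by ring
    rw [hQdef, hQdef, hQdef]
    push_cast at h ⊢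
    rw [e2, e3] at h
    rw [e1, e2]
    exact h
  -- the real errors
  obtain ⟨F, hFdef⟩ : ∃ F : ℕ → ℝ, ∀ n, F n = (P n : ℝ) - (Q n : ℝ) * α := ⟨_, fun _ => rfl⟩
  have hFrec : ∀ n : ℕ, F (n+2) = (u (n+1) : ℝ) * F (n+1) + F n := by
    intro n
    rw [hFdef, hFdef, hFdef, hPrec n, hQrec n]
    push_cast
    ring
  have hF0 : F 0 = 1 := by rw [hFdef, hP0, hQ0]; norm_num
  have hF1 : F 1 = -Int.fract (x 0) * F 0 := by
    rw [hFdef, hFdef, hP1, hQ1, hP0, hQ0]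
    rw [Int.fract, hx0, hu 0, hx0]
    push_cast
    ring
  have hFstep : ∀ n : ℕ, F (n+1) = -Int.fract (x n) * F n := by
    intro n
    induction n with
    | zero => exact hF1
    | succ n ih =>
      have hfne : Int.fract (x n) ≠ 0 := (hfrac n).ne'
      have hx' : x (n+1) = 1 / Int.fract (x n) := hxr n
      have hfr : Int.fract (x (n+1)) = x (n+1) - u (n+1) := by
        rw [Int.fract, hu (n+1)]
      rw [hFrec n, hfr, hx']
      have hFn : F n = -(1 / Int.fract (x n)) * F (n+1) := by
        rw [ih]; field_simp
      rw [hFn]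
      ring
  have hFsgn : ∀ n : ℕ, 0 < (-1:ℝ)^n * F n := by
    intro n
    induction n with
    | zero => simp [hF0]
    | succ n ih =>
      rw [hFstep n]
      have := hfrac n
      rw [pow_succ]
      nlinarith
  have hFpos : ∀ n : ℕ, Even n → 0 < F n := by
    intro n hn
    have := hFsgn n
    rwa [hn.neg_one_pow, one_mul] at this
  have hFneg : ∀ n : ℕ, Odd n → F n < 0 := by
    intro n hn
    have := hFsgn n
    rw [hn.neg_one_pow] at this
    linarith
  -- determinant
  have hdet : ∀ n : ℕ, P n * Q (n+1) - P (n+1) * Q n = (-1:ℤ)^n := by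
    intro n
    induction n with
    | zero => simp [hP0, hQ0, hP1, hQ1]
    | succ n ih =>
      rw [hPrec n, hQrec n, pow_succ]
      nlinarith [ih]
  -- Q facts
  have hQaux : ∀ n : ℕ, 1 ≤ Q (n+1) ∧ 0 ≤ Q n := by
    intro n
    induction n with
    | zero => simp [hQ0, hQ1]
    | succ n ih =>
      refine ⟨?_, le_trans zero_le_one ih.1⟩
      rw [hQrec n]
      nlinarith [hu1 n, ih.1, ih.2]
  have hQgr2 : ∀ n : ℕ, (n:ℤ) ≤ Q (n+1) ∧ (n:ℤ) + 1 ≤ Q (n+2) := by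
    intro n
    induction n with
    | zero =>
      constructor
      · simp [hQ1]
      · rw [hQrec 0, hQ0, hQ1]
        have := hu1 0
        omega
    | succ n ih =>
      refine ⟨by exact_mod_cast ih.2, ?_⟩
      rw [hQrec (n+1)]
      have h1 := hu1 (n+1)
      have h2 := (hQaux (n+1)).1
      have h3 := (hQaux n).1
      have h4 := ih.2
      push_cast
      nlinarith
  have hQgr : ∀ n : ℕ, (n:ℤ) ≤ Q (n+1) := fun n => (hQgr2 n).1
  -- choose the greatest even n with Q n ≤ b
  obtain ⟨N, hNdef⟩ : ∃ N, N = Nat.findGreatest (fun n => Even n ∧ Q n ≤ (b:ℤ)) (b+1) :=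
    ⟨_, rfl⟩
  have hNP := Nat.findGreatest_spec (P := fun n => Even n ∧ Q n ≤ (b:ℤ))
    (Nat.zero_le (b+1)) ⟨Even.zero, by simp [hQ0]⟩
  rw [← hNdef] at hNP
  obtain ⟨hNev, hNle⟩ := hNP
  have hNup : (b:ℤ) < Q (N+2) := by
    by_cases hc : N + 2 ≤ b + 1
    · have hlt : Nat.findGreatest (fun n => Even n ∧ Q n ≤ (b:ℤ)) (b+1) < N + 2 := by
        omega
      have hng := Nat.findGreatest_is_greatest hlt hc
      have hev : Even (N+2) := by
        obtain ⟨k, hk⟩ := hNev; exact ⟨k+1, by omega⟩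
      exact lt_of_not_ge fun hle => hng ⟨hev, hle⟩
    · have h1 : b ≤ N := by omega
      have h2 : ((b:ℕ):ℤ) < ((N+1:ℕ):ℤ) := by exact_mod_cast Nat.lt_succ_of_le h1
      have h3 : ((N+1:ℕ):ℤ) ≤ Q (N+1+1) := hQgr (N+1)
      exact lt_of_lt_of_le h2 h3
  -- choose l
  have hQN1pos : (0:ℤ) < Q (N+1) := (hQaux N).1
  have hQNnn : (0:ℤ) ≤ Q N := (hQaux N).2
  obtain ⟨l, hldef⟩ : ∃ l : ℤ, l = ((b:ℤ) - Q N) / Q (N+1) := ⟨_, rfl⟩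
  have hl0 : 0 ≤ l := hldef ▸ Int.ediv_nonneg (by linarith) hQN1pos.le
  have hlle : Q N + l * Q (N+1) ≤ (b:ℤ) := by
    have h := Int.ediv_mul_le ((b:ℤ) - Q N) hQN1pos.ne'
    rw [← hldef] at h
    linarith
  have hlgt : (b:ℤ) < Q N + (l+1) * Q (N+1) := by
    have h := Int.lt_ediv_add_one_mul_self ((b:ℤ) - Q N) hQN1pos
    rw [← hldef] at h
    linarith
  have hlu : l ≤ u (N+1) - 1 := by
    have h2 : (b:ℤ) < Q N + u (N+1) * Q (N+1) := by
      have h2' := hNup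
      rw [hQrec N] at h2'
      linarith
    have h3 : l * Q (N+1) < u (N+1) * Q (N+1) := by linarith
    have h4 := lt_of_mul_lt_mul_right h3 hQN1pos.le
    omega
  obtain ⟨p, hp⟩ : ∃ p : ℤ, p = P N + l * P (N+1) := ⟨_, rfl⟩
  obtain ⟨q, hq⟩ : ∃ q : ℤ, q = Q N + l * Q (N+1) := ⟨_, rfl⟩
  have hq1 : 1 ≤ q := by
    rcases Nat.eq_zero_or_pos N with h0 | h1
    · have hQN : Q N = 0 := by rw [h0]; exact hQ0
      have hQN1 : Q (N+1) = 1 := by rw [h0]; exact hQ1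
      have hlgt' := hlgt
      rw [hQN, hQN1] at hlgt'
      rw [hq, hQN, hQN1]
      omega
    · have h2 : 1 ≤ Q N := by
        obtain ⟨c, hc⟩ := Nat.exists_eq_add_of_lt h1
        have h3 := (hQaux c).1
        rw [hc]
        simpa using h3
      rw [hq]
      nlinarith [hl0, hQN1pos]
  have hqb : q ≤ (b:ℤ) := by rw [hq]; exact hlle
  -- positivity of the semiconvergent value
  have hFN1neg : F (N+1) < 0 := hFneg _ (Even.add_one hNev)
  have hFN2pos : 0 < F (N+2) := hFpos _ (by obtain ⟨k,hk⟩ := hNev; exact ⟨k+1, by omega⟩)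
  have hFNpos : 0 < F N := hFpos N hNev
  have hval : (p:ℝ) - (q:ℝ) * α = F N + (l:ℝ) * F (N+1) := by
    rw [hp, hq, hFdef, hFdef]
    push_cast
    ring
  have hΨpos : 0 < (p:ℝ) - (q:ℝ) * α := by
    rw [hval]
    have hF2 : F (N+2) = (u (N+1) : ℝ) * F (N+1) + F N := hFrec N
    have hlu' : (l:ℝ) ≤ (u (N+1) : ℝ) := by exact_mod_cast by omega
    nlinarith
  -- the pair (p,q) equals (a,b)
  have hmain : p = a ∧ q = (b:ℤ) := by
    by_contra hcon
    have hne : (p, q.toNat) ≠ (a, b) := by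
      intro h
      rw [Prod.mk.injEq] at h
      exact hcon ⟨h.1, by omega⟩
    have hq1' : 1 ≤ q.toNat := by omega
    have hqb' : q.toNat ≤ b := by omega
    have hcast : ((q.toNat : ℕ) : ℝ) = (q : ℝ) := by
      have h : ((q.toNat : ℕ) : ℤ) = q := Int.toNat_of_nonneg (by omega)
      exact_mod_cast congrArg (Int.cast : ℤ → ℝ) h
    have hbeats : (a:ℝ) - (b:ℝ) * α < (p:ℝ) - (q:ℝ) * α := by
      have h := hbest p q.toNat hq1' hqb' hne (by rw [hcast]; exact hΨpos)
      rwa [hcast] at h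
    -- write (a,b) in the basis of consecutive convergents
    have hdetN : P N * Q (N+1) - P (N+1) * Q N = 1 := by
      rw [hdet N, hNev.neg_one_pow]
    obtain ⟨m, hm⟩ : ∃ m : ℤ, m = a * Q (N+1) - (b:ℤ) * P (N+1) := ⟨_, rfl⟩
    obtain ⟨k, hk⟩ : ∃ k : ℤ, k = (b:ℤ) * P N - a * Q N := ⟨_, rfl⟩
    have ha' : a = m * P N + k * P (N+1) := by
      rw [hm, hk]
      linear_combination (-a) * hdetN
    have hb' : (b:ℤ) = m * Q N + k * Q (N+1) := by
      rw [hm, hk]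
      linear_combination (-(b:ℤ)) * hdetN
    have hvala : (a:ℝ) - (b:ℝ) * α = (m:ℝ) * F N + (k:ℝ) * F (N+1) := by
      have ha'' : (a:ℝ) = (m:ℝ) * (P N:ℝ) + (k:ℝ) * (P (N+1):ℝ) := by exact_mod_cast ha'
      have hb'' : ((b:ℕ):ℝ) = (m:ℝ) * (Q N:ℝ) + (k:ℝ) * (Q (N+1):ℝ) := by exact_mod_cast hb'
      rw [hFdef, hFdef, ha'', hb'']
      ring
    have hm1 : 1 ≤ m := by
      by_contra hm0
      push_neg at hm0
      have hm0' : m ≤ 0 := by omega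
      have hmR : (m:ℝ) ≤ 0 := by exact_mod_cast hm0'
      have hkneg : k ≤ -1 := by
        by_contra hk0
        push_neg at hk0
        have hk0' : 0 ≤ k := by omega
        have hkR : (0:ℝ) ≤ (k:ℝ) := by exact_mod_cast hk0'
        have p1 : 0 ≤ (-(m:ℝ)) * F N := mul_nonneg (by linarith) hFNpos.le
        have p2 : 0 ≤ (k:ℝ) * (-(F (N+1))) := mul_nonneg hkR (by linarith)
        nlinarith [hpos, hvala]
      have hble : (b:ℤ) ≤ -1 := by
        have p1 : 0 ≤ (-m) * Q N := mul_nonneg (by omega) hQNnn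
        have p2 : 0 ≤ (-1 - k) * Q (N+1) := mul_nonneg (by omega) hQN1pos.le
        nlinarith [hb']
      omega
    have hkl : l + 1 ≤ k := by
      by_contra hkl'
      push_neg at hkl'
      have hkl'' : k ≤ l := by omega
      have hkR : (k:ℝ) ≤ (l:ℝ) := by exact_mod_cast hkl''
      have hmR : (1:ℝ) ≤ (m:ℝ) := by exact_mod_cast hm1
      rw [hvala, hval] at hbeats
      have p1 : 0 ≤ ((m:ℝ) - 1) * F N := mul_nonneg (by linarith) hFNpos.le
      have p2 : 0 ≤ ((l:ℝ) - (k:ℝ)) * (-(F (N+1))) := mul_nonneg (by linarith) (by linarith)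
      nlinarith
    have hfin : Q N + (l+1) * Q (N+1) ≤ (b:ℤ) := by
      have p1 : 0 ≤ (m - 1) * Q N := mul_nonneg (by omega) hQNnn
      have p2 : 0 ≤ (k - (l+1)) * Q (N+1) := mul_nonneg (by omega) hQN1pos.le
      nlinarith [hb']
    omega
  -- conclude
  refine ⟨(N:ℤ) - 1, by omega, ?_, l, hl0, ?_, ?_, ?_⟩
  · obtain ⟨c, hc⟩ := hNev
    exact ⟨(c:ℤ) - 1, by push_cast [hc]; ring⟩
  · have h : ((N:ℤ) - 1 + 2).toNat = N + 1 := by omega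
    rw [h]
    exact hlu
  · have e1 : (N:ℤ) - 1 + 1 = ((N+1 : ℕ) : ℤ) - 1 := by push_cast; ring
    rw [e1, ← hPdef, ← hPdef, ← hp]
    exact hmain.1.symm
  · have e1 : (N:ℤ) - 1 + 1 = ((N+1 : ℕ) : ℤ) - 1 := by push_cast; ring
    rw [e1, ← hQdef, ← hQdef, ← hq]
    exact hmain.2.symm
end

section
/- Let α be irrational with semiconvergent s_{i,l}/t_{i,l} that is not a convergent (i.e., 1 ≤ l ≤ u_{i+2} − 1). If s' ∈ ℤ, t' ∈ ℕ with t' ≤ t_{i,l} satisfy |s' − t'α| < |s_{i,l} − t_{i,l}α|, then s'/t' equals the (i+1)-th convergent s_{i+1}/t_{i+1}. -/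
set_option maxHeartbeats 1600000 in
/-- Let `α` be irrational with continued fraction `[u_0; u_1, …]`, convergents `s_i/t_i`
(conventions `s_{-1}=1, t_{-1}=0, s_{-2}=0, t_{-2}=1`), and let
`s_{i,l} = s_i + l·s_{i+1}`, `t_{i,l} = t_i + l·t_{i+1}` be a semiconvergent that is not a
convergent (i.e. `1 ≤ l ≤ u_{i+2} − 1`). If `a' ∈ ℤ`, `b' ∈ ℕ` with `1 ≤ b' ≤ t_{i,l}`
satisfy `|a' − b'α| < |s_{i,l} − t_{i,l}·α|`, then `a'/b'` equals the `(i+1)`-th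
convergent `s_{i+1}/t_{i+1}`. -/
theorem stmt_10 (α : ℝ) (hα : Irrational α)
    (x : ℕ → ℝ) (hx0 : x 0 = α) (hxr : ∀ i : ℕ, x (i+1) = 1 / Int.fract (x i))
    (u : ℕ → ℤ) (hu : ∀ i : ℕ, u i = ⌊x i⌋)
    (s t : ℤ → ℤ)
    (hs1 : s (-1) = 1) (ht1 : t (-1) = 0) (hs2 : s (-2) = 0) (ht2 : t (-2) = 1)
    (hsr : ∀ i : ℕ, s (i : ℤ) = u i * s ((i : ℤ) - 1) + s ((i : ℤ) - 2))
    (htr : ∀ i : ℕ, t (i : ℤ) = u i * t ((i : ℤ) - 1) + t ((i : ℤ) - 2))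
    (i : ℤ) (hi : -1 ≤ i) (l : ℤ) (hl1 : 1 ≤ l) (hl2 : l ≤ u (i + 2).toNat - 1)
    (a' : ℤ) (b' : ℕ) (hb' : 1 ≤ b') (hb'le : (b' : ℤ) ≤ t i + l * t (i + 1))
    (happrox : |(a' : ℝ) - (b' : ℝ) * α| <
      |((s i + l * s (i + 1) : ℤ) : ℝ) - ((t i + l * t (i + 1) : ℤ) : ℝ) * α|) :
    (a' : ℚ) / (b' : ℚ) = ((s (i + 1) : ℚ)) / ((t (i + 1) : ℚ)) := by
  -- irrationality of all complete quotients
  have hxirr : ∀ k : ℕ, Irrational (x k) := by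
    intro k
    induction k with
    | zero => rwa [hx0]
    | succ k ih =>
      rw [hxr k, one_div]
      exact (ih.sub_intCast ⌊x k⌋).inv
  have hfract : ∀ k : ℕ, 0 < Int.fract (x k) := by
    intro k
    rcases lt_or_eq_of_le (Int.fract_nonneg (x k)) with h | h
    · exact h
    · exfalso
      apply (hxirr k).ne_int ⌊x k⌋
      have := Int.floor_add_fract (x k)
      rw [← h] at this
      linarith
  have hxgt : ∀ k : ℕ, 1 < x (k+1) := by
    intro k
    rw [hxr k]
    exact (one_lt_div (hfract k)).mpr (Int.fract_lt_one (x k))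
  have e01 : ((0:ℕ):ℤ) - 1 = -1 := by norm_num
  have e02 : ((0:ℕ):ℤ) - 2 = -2 := by norm_num
  -- positivity of denominators
  have hts : ∀ j : ℕ, 0 ≤ t ((j:ℤ) - 1) ∧ 1 ≤ t (j:ℤ) := by
    intro j
    induction j with
    | zero =>
      constructor
      · rw [e01, ht1]
      · have h0 := htr 0
        rw [e01, e02, ht1, ht2] at h0
        rw [h0]
        simp
    | succ j ih =>
      have hu1 : 1 ≤ u (j+1) := by
        rw [hu (j+1)]
        exact Int.le_floor.mpr (by exact_mod_cast (hxgt j).le)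
      have e1 : ((j+1 : ℕ) : ℤ) - 1 = (j:ℤ) := by push_cast; ring
      have e2 : ((j+1 : ℕ) : ℤ) - 2 = (j:ℤ) - 1 := by push_cast; ring
      have h0 := htr (j+1)
      rw [e1, e2] at h0
      constructor
      · rw [e1]; linarith [ih.2]
      · rw [h0]
        have h1 : 1 * 1 ≤ u (j+1) * t (j:ℤ) :=
          mul_le_mul hu1 ih.2 (by norm_num) (by linarith)
        linarith [ih.1]
  -- the fundamental identity for errors
  have he : ∀ j : ℕ, (s ((j:ℤ)-2) : ℝ) - (t ((j:ℤ)-2) : ℝ) * α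
      = -(x j) * ((s ((j:ℤ)-1) : ℝ) - (t ((j:ℤ)-1) : ℝ) * α) := by
    intro j
    induction j with
    | zero =>
      rw [e01, e02, hs1, ht1, hs2, ht2, hx0]
      push_cast
      ring
    | succ j ih =>
      have e1 : ((j+1 : ℕ) : ℤ) - 1 = (j:ℤ) := by push_cast; ring
      have e2 : ((j+1 : ℕ) : ℤ) - 2 = (j:ℤ) - 1 := by push_cast; ring
      rw [e1, e2]
      have hf : Int.fract (x j) ≠ 0 := ne_of_gt (hfract j)
      have hxj : x (j+1) = 1 / Int.fract (x j) := hxr j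
      have huj : (u j : ℝ) = x j - Int.fract (x j) := by
        rw [hu j]
        exact (Int.self_sub_fract (x j)).symm
      have key : (s (j:ℤ) : ℝ) - (t (j:ℤ) : ℝ) * α
          = -(Int.fract (x j)) * ((s ((j:ℤ)-1) : ℝ) - (t ((j:ℤ)-1) : ℝ) * α) := by
        rw [hsr j, htr j]
        push_cast
        rw [huj]
        linear_combination ih
      rw [key, hxj]
      field_simp
  -- the determinant identity
  have hdet : ∀ j : ℕ, (s ((j:ℤ)-1) * t ((j:ℤ)-2) - s ((j:ℤ)-2) * t ((j:ℤ)-1)) ^ 2 = 1 := by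
    intro j
    induction j with
    | zero => rw [e01, e02, hs1, ht1, hs2, ht2]; norm_num
    | succ j ih =>
      have e1 : ((j+1 : ℕ) : ℤ) - 1 = (j:ℤ) := by push_cast; ring
      have e2 : ((j+1 : ℕ) : ℤ) - 2 = (j:ℤ) - 1 := by push_cast; ring
      rw [e1, e2]
      have h3 : s (j:ℤ) * t ((j:ℤ)-1) - s ((j:ℤ)-1) * t (j:ℤ)
          = -(s ((j:ℤ)-1) * t ((j:ℤ)-2) - s ((j:ℤ)-2) * t ((j:ℤ)-1)) := by
        rw [hsr j, htr j]; ring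
      rw [h3, neg_sq]
      exact ih
  -- instantiate at j with (j:ℤ) = i+2
  set j : ℕ := (i+2).toNat with hjdef
  have hj : (j:ℤ) = i + 2 := Int.toNat_of_nonneg (by omega)
  have hj1 : 1 ≤ j := by omega
  have ej1 : (j:ℤ) - 2 = i := by omega
  have ej2 : (j:ℤ) - 1 = i + 1 := by omega
  have heq := he j
  rw [ej1, ej2] at heq
  have hdet' := hdet j
  rw [ej1, ej2] at hdet'
  -- t positivity at i, i+1
  obtain ⟨k, hk⟩ : ∃ k : ℕ, (k:ℤ) = i + 1 := ⟨(i+1).toNat, Int.toNat_of_nonneg (by omega)⟩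
  have htsk := hts k
  rw [hk] at htsk
  have ek1 : (i:ℤ) + 1 - 1 = i := by ring
  rw [ek1] at htsk
  have hTi : 0 ≤ t i := htsk.1
  have hT1 : 1 ≤ t (i+1) := htsk.2
  have hTl : 1 ≤ t i + l * t (i+1) := by nlinarith
  -- l < x j
  obtain ⟨k', hk'⟩ : ∃ k' : ℕ, k' + 1 = j := ⟨j - 1, by omega⟩
  have hxj1 : 1 < x j := by rw [← hk']; exact hxgt k'
  have hlx : (l : ℝ) < x j := by
    have h1 : (u j : ℝ) ≤ x j := by rw [hu j]; exact Int.floor_le (x j)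
    have h2 : (l : ℝ) ≤ (u j : ℝ) - 1 := by exact_mod_cast hl2
    linarith
  have hc : (l:ℝ) - x j < 0 := by linarith
  -- determinant squared is 1
  have hD2 : (s (i+1) * (t i + l * t (i+1)) - (s i + l * s (i+1)) * t (i+1)) *
      (s (i+1) * (t i + l * t (i+1)) - (s i + l * s (i+1)) * t (i+1)) = 1 := by
    linear_combination hdet'
  -- decompose (a', b') in the unimodular basis
  obtain ⟨m, n, ha, hb⟩ : ∃ m n : ℤ,
      a' = m * s (i+1) + n * (s i + l * s (i+1)) ∧
      (b' : ℤ) = m * t (i+1) + n * (t i + l * t (i+1)) := by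
    refine ⟨(s (i+1) * (t i + l * t (i+1)) - (s i + l * s (i+1)) * t (i+1)) *
        (a' * (t i + l * t (i+1)) - (b':ℤ) * (s i + l * s (i+1))),
      (s (i+1) * (t i + l * t (i+1)) - (s i + l * s (i+1)) * t (i+1)) *
        ((b':ℤ) * s (i+1) - a' * t (i+1)), ?_, ?_⟩
    · linear_combination (-a') * hD2
    · linear_combination (-(b':ℤ)) * hD2
  -- the error of the (i+1)-th convergent is nonzero
  have hε : (s (i+1) : ℝ) - (t (i+1) : ℝ) * α ≠ 0 := by
    intro h
    apply hα.ne_rat ((s (i+1) : ℚ) / (t (i+1) : ℚ))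
    have hT1R : ((t (i+1) : ℤ) : ℝ) ≠ 0 := by
      have : (0:ℤ) < t (i+1) := hT1
      exact_mod_cast this.ne'
    have hαeq : α = (s (i+1) : ℝ) / (t (i+1) : ℝ) := by
      field_simp
      linarith
    rw [hαeq]
    push_cast
    ring
  -- the semiconvergent error
  have hEil : ((s i + l * s (i + 1) : ℤ) : ℝ) - ((t i + l * t (i + 1) : ℤ) : ℝ) * α
      = ((l:ℝ) - x j) * ((s (i+1) : ℝ) - (t (i+1) : ℝ) * α) := by
    push_cast
    linear_combination heq
  have happ : |(a' : ℝ) - (b' : ℝ) * α|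
      < |(l:ℝ) - x j| * |(s (i+1) : ℝ) - (t (i+1) : ℝ) * α| := by
    rw [← abs_mul, ← hEil]
    exact happrox
  have haE : (a' : ℝ) - (b' : ℝ) * α
      = ((m:ℝ) + (n:ℝ) * ((l:ℝ) - x j)) * ((s (i+1) : ℝ) - (t (i+1) : ℝ) * α) := by
    have haR : (a' : ℝ) = (m:ℝ) * (s (i+1) : ℝ) + (n:ℝ) * ((s i : ℝ) + (l:ℝ) * (s (i+1) : ℝ)) := by
      exact_mod_cast congrArg (fun z : ℤ => (z:ℝ)) ha
    have hbR : ((b' : ℕ) : ℝ) = (m:ℝ) * (t (i+1) : ℝ) + (n:ℝ) * ((t i : ℝ) + (l:ℝ) * (t (i+1) : ℝ)) := by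
      exact_mod_cast congrArg (fun z : ℤ => (z:ℝ)) hb
    rw [haR, hbR]
    linear_combination (n:ℝ) * heq
  have key : |(m:ℝ) + (n:ℝ) * ((l:ℝ) - x j)| < |(l:ℝ) - x j| := by
    have h1 : |(m:ℝ) + (n:ℝ) * ((l:ℝ) - x j)| * |(s (i+1) : ℝ) - (t (i+1) : ℝ) * α|
        < |(l:ℝ) - x j| * |(s (i+1) : ℝ) - (t (i+1) : ℝ) * α| := by
      rw [← abs_mul, ← haE]
      exact happ
    exact lt_of_mul_lt_mul_right h1 (abs_pos.mpr hε).le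
  rw [abs_of_neg hc] at key
  have hbZ : (1:ℤ) ≤ (b' : ℤ) := by exact_mod_cast hb'
  -- case analysis on n
  rcases lt_trichotomy n 0 with hn | hn | hn
  · -- n ≤ -1
    exfalso
    rcases le_or_gt m 0 with hm | hm
    · -- m ≤ 0 : denominator nonpositive
      have h1 : m * t (i+1) ≤ 0 := mul_nonpos_of_nonpos_of_nonneg hm (by linarith)
      have h2 : n * (t i + l * t (i+1)) ≤ -(t i + l * t (i+1)) := by
        nlinarith [mul_nonneg (by omega : (0:ℤ) ≤ -(n+1)) (by linarith : (0:ℤ) ≤ t i + l * t (i+1))]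
      linarith [hb, hTl, hbZ]
    · -- m ≥ 1 : error too large
      have hnR : (n : ℝ) ≤ -1 := by exact_mod_cast (by omega : n ≤ -1)
      have hmR : (1:ℝ) ≤ (m : ℝ) := by exact_mod_cast hm
      have hnc : -((l:ℝ) - x j) ≤ (n:ℝ) * ((l:ℝ) - x j) := by
        nlinarith [mul_nonneg (by linarith : (0:ℝ) ≤ -((n:ℝ)+1)) (by linarith : (0:ℝ) ≤ -((l:ℝ) - x j))]
      have hle := le_abs_self ((m:ℝ) + (n:ℝ) * ((l:ℝ) - x j))
      linarith
  · -- n = 0 : the conclusion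
    have ha0 : a' = m * s (i+1) := by rw [ha, hn]; ring
    have hb0 : (b' : ℤ) = m * t (i+1) := by rw [hb, hn]; ring
    have hbQ : ((b' : ℕ) : ℚ) ≠ 0 := by
      have : 0 < b' := hb'
      exact_mod_cast this.ne'
    have hTQ : ((t (i+1) : ℤ) : ℚ) ≠ 0 := by
      have : (0:ℤ) < t (i+1) := hT1
      exact_mod_cast this.ne'
    rw [div_eq_div_iff hbQ hTQ]
    have hfin : a' * t (i+1) = s (i+1) * (b' : ℤ) := by rw [ha0, hb0]; ring
    exact_mod_cast hfin
  · -- n ≥ 1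
    exfalso
    rcases le_or_gt m 0 with hm | hm
    · -- m ≤ 0 : error too large
      have hnR : (1:ℝ) ≤ (n : ℝ) := by exact_mod_cast hn
      have hmR : (m : ℝ) ≤ 0 := by exact_mod_cast hm
      have hnc : (n:ℝ) * ((l:ℝ) - x j) ≤ (l:ℝ) - x j := by
        nlinarith [mul_nonneg (by linarith : (0:ℝ) ≤ (n:ℝ) - 1) (by linarith : (0:ℝ) ≤ -((l:ℝ) - x j))]
      have hle := neg_abs_le ((m:ℝ) + (n:ℝ) * ((l:ℝ) - x j))
      linarith
    · -- m ≥ 1 : denominator too large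
      have h1 : t (i+1) ≤ m * t (i+1) := by
        nlinarith [mul_nonneg (by omega : (0:ℤ) ≤ m - 1) (by linarith : (0:ℤ) ≤ t (i+1))]
      have h2 : (t i + l * t (i+1)) ≤ n * (t i + l * t (i+1)) := by
        nlinarith [mul_nonneg (by omega : (0:ℤ) ≤ n - 1) (by linarith : (0:ℤ) ≤ t i + l * t (i+1))]
      linarith [hb, hb'le, hT1]
end

section
/- Let K = ℚ(√p, √q) be a real biquadratic field with p ≡ 2 (mod 4), q ≡ 3 (mod 4) squarefree, and r = pq/gcd(p,q)². Then {1, √p, √q, (√p+√r)/2} is a ℤ-basis of the ring of integers O_K. -/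
open NumberField

private lemma sqfree_rat' (n : ℕ) (hn : Squarefree n) (t : ℚ) (k : ℤ)
    (h : (n : ℚ) * t ^ 2 = (k : ℚ)) : ∃ B : ℤ, t = (B : ℚ) := by
  have hden : (t.den : ℚ) ≠ 0 := by exact_mod_cast t.den_nz
  have ht : (t.num : ℚ) = t * t.den := by
    rw [eq_comm, ← eq_div_iff hden, Rat.num_div_den t]
  have key : (n : ℚ) * (t.num : ℚ) ^ 2 = (k : ℚ) * (t.den : ℚ) ^ 2 := by
    rw [ht]; nlinarith [h]
  have keyZ : (n : ℤ) * t.num ^ 2 = k * (t.den : ℤ) ^ 2 := by exact_mod_cast key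
  have hdvd : ((t.den : ℤ)) ^ 2 ∣ (n : ℤ) * t.num ^ 2 := ⟨k, by linarith [keyZ]⟩
  have hcop : IsCoprime ((t.den : ℤ) ^ 2) (t.num ^ 2) := by
    apply IsCoprime.pow
    rw [Int.isCoprime_iff_gcd_eq_one, Int.gcd_comm]
    exact_mod_cast t.reduced
  have hdvd2 : ((t.den : ℤ)) ^ 2 ∣ (n : ℤ) := (IsCoprime.dvd_of_dvd_mul_right hcop hdvd)
  have hdvdN : t.den ^ 2 ∣ n := by exact_mod_cast hdvd2
  have : IsUnit t.den := hn t.den (by rwa [← pow_two])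
  have hden1 : t.den = 1 := Nat.isUnit_iff.mp this
  exact ⟨t.num, by rw [← Rat.num_div_den t, hden1]; simp⟩

private lemma quad_arith' (n : ℕ) (hn : Squarefree n) (hmod : n % 4 = 2 ∨ n % 4 = 3)
    (x y : ℚ) (A m : ℤ) (hA : 2 * x = (A : ℚ)) (hm : x ^ 2 - (n : ℚ) * y ^ 2 = (m : ℚ)) :
    (∃ X : ℤ, x = (X : ℚ)) ∧ (∃ Y : ℤ, y = (Y : ℚ)) := by
  have h1 : (n : ℚ) * (2 * y) ^ 2 = ((A ^ 2 - 4 * m : ℤ) : ℚ) := by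
    push_cast
    linear_combination (2*x + (A:ℚ)) * hA - 4 * hm
  obtain ⟨B, hB⟩ := sqfree_rat' n hn (2 * y) _ h1
  have h3 : A ^ 2 - (n : ℤ) * B ^ 2 = 4 * m := by
    have h2 : (A : ℚ) ^ 2 - (n : ℚ) * (B : ℚ) ^ 2 = 4 * (m : ℚ) := by
      linear_combination 4*hm - (2*x + (A:ℚ))*hA + (n:ℚ)*(2*y+(B:ℚ))*hB
    exact_mod_cast h2
  have hn4 : (n : ℤ) % 4 = 2 ∨ (n : ℤ) % 4 = 3 := by omega
  obtain ⟨ra, a, hra0, hra1, hAeq⟩ : ∃ ra a : ℤ, 0 ≤ ra ∧ ra < 2 ∧ A = 2*a + ra :=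
    ⟨A % 2, A / 2, Int.emod_nonneg _ two_ne_zero, Int.emod_lt_of_pos _ (by norm_num), by omega⟩
  obtain ⟨rb, b, hrb0, hrb1, hBeq⟩ : ∃ rb b : ℤ, 0 ≤ rb ∧ rb < 2 ∧ B = 2*b + rb :=
    ⟨B % 2, B / 2, Int.emod_nonneg _ two_ne_zero, Int.emod_lt_of_pos _ (by norm_num), by omega⟩
  subst hAeq hBeq
  have key : ra = 0 ∧ rb = 0 := by
    interval_cases ra <;> interval_cases rb
    · exact ⟨rfl, rfl⟩
    · obtain ⟨X, hX⟩ : ∃ X : ℤ, 4*X - (n:ℤ) = 0 :=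
        ⟨a*a - (n:ℤ)*(b*b) - (n:ℤ)*b - m, by linear_combination h3⟩
      omega
    · obtain ⟨X, hX⟩ : ∃ X : ℤ, 4*X + 1 = 0 :=
        ⟨a*a + a - (n:ℤ)*(b*b) - m, by linear_combination h3⟩
      omega
    · obtain ⟨X, hX⟩ : ∃ X : ℤ, 4*X + 1 - (n:ℤ) = 0 :=
        ⟨a*a + a - (n:ℤ)*(b*b) - (n:ℤ)*b - m, by linear_combination h3⟩
      omega
  obtain ⟨h0, h1'⟩ := key
  subst h0 h1'
  constructor
  · exact ⟨a, by push_cast at hA ⊢; linarith⟩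
  · exact ⟨b, by push_cast at hB ⊢; linarith⟩

private lemma rat_int_of_isIntegral' {K : Type*} [Field K] [CharZero K] (u : ℚ)
    (h : IsIntegral ℤ ((u : K))) : ∃ m : ℤ, u = (m : ℚ) := by
  have h2 : IsIntegral ℤ u := by
    rw [← isIntegral_algebraMap_iff (A := ℚ) (B := K) (algebraMap ℚ K).injective]
    rwa [eq_ratCast (algebraMap ℚ K) u]
  obtain ⟨m, hm⟩ := IsIntegrallyClosed.isIntegral_iff.mp h2
  exact ⟨m, hm.symm⟩

private lemma quad_K' {K : Type*} [Field K] [CharZero K] (s : K) (n : ℕ) (hn : Squarefree n)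
    (hmod : n % 4 = 2 ∨ n % 4 = 3) (hs : s ^ 2 = (n : K)) (x y : ℚ)
    (h1 : IsIntegral ℤ ((x : K) + (y : K) * s))
    (h2 : IsIntegral ℤ ((x : K) - (y : K) * s)) :
    (∃ X : ℤ, x = (X : ℚ)) ∧ (∃ Y : ℤ, y = (Y : ℚ)) := by
  have hsum : IsIntegral ℤ (((2 * x : ℚ) : K)) := by
    have h := h1.add h2
    have e : (((2 * x : ℚ) : K)) = (x : K) + (y : K) * s + ((x : K) - (y : K) * s) := by
      push_cast; ring
    rw [e]; exact h
  have hprod : IsIntegral ℤ (((x ^ 2 - (n : ℚ) * y ^ 2 : ℚ) : K)) := by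
    have h := h1.mul h2
    have e : (((x ^ 2 - (n : ℚ) * y ^ 2 : ℚ) : K)) = ((x : K) + (y : K) * s) * ((x : K) - (y : K) * s) := by
      push_cast
      linear_combination ((y:K)^2) * hs
    rw [e]; exact h
  obtain ⟨A, hA⟩ := rat_int_of_isIntegral' _ hsum
  obtain ⟨m, hm⟩ := rat_int_of_isIntegral' _ hprod
  exact quad_arith' n hn hmod x y A m hA hm

set_option maxHeartbeats 4000000 in
/-- Let `K = ℚ(√p, √q)` be a real biquadratic field with `p ≡ 2 (mod 4)`,
`q ≡ 3 (mod 4)` squarefree, and `r = pq/gcd(p,q)²`. Then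
`{1, √p, √q, (√p+√r)/2}` is a `ℤ`-basis of the ring of integers `𝓞 K`:
an element of `K` is an algebraic integer iff it is a `ℤ`-linear combination of these. -/
theorem stmt_12 (p q : ℕ) (hp : Squarefree p) (hq : Squarefree q) (hpq : p ≠ q)
    (hp4 : p % 4 = 2) (hq4 : q % 4 = 3)
    (K : Type*) [Field K] [NumberField K]
    (sp sq sr : K)
    (hsp : sp ^ 2 = (p : K)) (hsq : sq ^ 2 = (q : K))
    (hsr2 : sr ^ 2 = ((p * q / (Nat.gcd p q)^2 : ℕ) : K))
    (hsr : (Nat.gcd p q : K) * sr = sp * sq)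
    (hgen : Algebra.adjoin ℚ {sp, sq} = ⊤)
    (hdeg : Module.finrank ℚ K = 4) :
    ∀ z : K, IsIntegral ℤ z ↔
      ∃ a b c d : ℤ, z = (a : K) + (b : K) * sp + (c : K) * sq + (d : K) * ((sp + sr) / 2) := by
  -- ## Numerical set-up
  have hp0 : 0 < p := by omega
  have hq0 : 0 < q := by omega
  set g := Nat.gcd p q with hgdef
  set p' := p / g with hp'def
  set q' := q / g with hq'def
  set r := p * q / g ^ 2 with hrdef
  have hgp : g ∣ p := Nat.gcd_dvd_left p q
  have hgq : g ∣ q := Nat.gcd_dvd_right p q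
  have hg0 : 0 < g := Nat.gcd_pos_of_pos_left _ hp0
  have hpp' : p = g * p' := (Nat.mul_div_cancel' hgp).symm
  have hqq' : q = g * q' := (Nat.mul_div_cancel' hgq).symm
  have hrr : r = p' * q' := by
    rw [hrdef, pow_two]
    exact (Nat.div_mul_div_comm hgp hgq).symm
  have hmodp2 : p % 2 = (g % 2) * (p' % 2) % 2 := by rw [hpp', Nat.mul_mod]
  have hmodq2 : q % 2 = (g % 2) * (q' % 2) % 2 := by rw [hqq', Nat.mul_mod]
  have hgodd : g % 2 = 1 := by
    have h : g % 2 = 0 ∨ g % 2 = 1 := by omega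
    rcases h with h | h
    · rw [h] at hmodq2; simp at hmodq2; omega
    · exact h
  have hq'odd : q' % 2 = 1 := by
    have h : q' % 2 = 0 ∨ q' % 2 = 1 := by omega
    rcases h with h | h
    · rw [h] at hmodq2; simp at hmodq2; omega
    · exact h
  have hp'even : p' % 2 = 0 := by
    have h : p' % 2 = 0 ∨ p' % 2 = 1 := by omega
    rcases h with h | h
    · exact h
    · rw [h, hgodd] at hmodp2; simp at hmodp2; omega
  have hp'4 : p' % 4 = 2 := by
    have h1 : ¬ (4 ∣ p') := by
      intro h
      obtain ⟨k, hk⟩ := h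
      have : p = 4 * (g * k) := by rw [hpp', hk]; ring
      omega
    omega
  have hr4 : r % 4 = 2 := by
    obtain ⟨k, hk⟩ : ∃ k, p' = 4*k + 2 := ⟨p'/4, by omega⟩
    obtain ⟨l, hl⟩ : ∃ l, q' = 2*l + 1 := ⟨q'/2, by omega⟩
    have : r = 4*(2*k*l + k + l) + 2 := by rw [hrr, hk, hl]; ring
    omega
  have hpqr : p * q = r * g ^ 2 := by rw [hrr, hpp', hqq']; ring
  obtain ⟨mm, hmm⟩ : ∃ m, p + r = 4 * m := by
    obtain ⟨k, hk⟩ : ∃ k, p' = 4*k + 2 := ⟨p'/4, by omega⟩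
    obtain ⟨w, hw⟩ : ∃ w, g + q' = 2*w := ⟨(g+q')/2, by omega⟩
    refine ⟨(2*k+1)*w, ?_⟩
    have h1 : p + r = p' * (g + q') := by rw [hpp', hrr]; ring
    rw [h1, hk, hw]; ring
  obtain ⟨mp, hmp⟩ : ∃ m, p' = 2 * m := ⟨p'/2, by omega⟩
  have hrsq : Squarefree r := by
    rw [hrr]
    have hcop : Nat.Coprime p' q' := Nat.coprime_div_gcd_div_gcd hg0
    exact (Nat.squarefree_mul hcop).mpr
      ⟨hp.squarefree_of_dvd ⟨g, by rw [hpp']; ring⟩, hq.squarefree_of_dvd ⟨g, by rw [hqq']; ring⟩⟩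
  -- ## Field facts
  have hgK : (g : K) ≠ 0 := Nat.cast_ne_zero.mpr (by omega)
  have hsr2' : sr ^ 2 = (r : K) := hsr2
  have hcastp : (p : K) = (g : K) * (p' : K) := by rw [hpp']; push_cast; ring
  have hspsr : sp * sr = (p' : K) * sq := by
    apply mul_left_cancel₀ hgK
    calc (g:K) * (sp * sr) = sp * ((g:K) * sr) := by ring
    _ = sp * (sp * sq) := by rw [hsr]
    _ = (p : K) * sq := by rw [← hsp]; ring
    _ = (g:K) * ((p':K) * sq) := by rw [hcastp]; ring
  -- ## The basis {1, sp, sq, sp*sq}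
  set e : Fin 4 → K := ![1, sp, sq, sp * sq] with he
  have hprod : ∀ i j : Fin 4, e i * e j ∈ Submodule.span ℚ (Set.range e) := by
    have mem : ∀ i : Fin 4, e i ∈ Submodule.span ℚ (Set.range e) :=
      fun i => Submodule.subset_span ⟨i, rfl⟩
    have memc : ∀ (u : ℚ) (i : Fin 4), (u : K) * e i ∈ Submodule.span ℚ (Set.range e) := by
      intro u i
      rw [← Rat.smul_def]
      exact Submodule.smul_mem _ _ (mem i)
    have he0 : e 0 = 1 := rfl
    have he1 : e 1 = sp := rfl
    have he2 : e 2 = sq := rfl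
    have he3 : e 3 = sp * sq := rfl
    have hppK : sp * sp = ((p : ℚ) : K) * e 0 := by rw [he0]; push_cast; rw [← hsp]; ring
    have hqqK : sq * sq = ((q : ℚ) : K) * e 0 := by rw [he0]; push_cast; rw [← hsq]; ring
    intro i j
    fin_cases i <;> fin_cases j
    · show e 0 * e 0 ∈ Submodule.span ℚ (Set.range e)
      rw [show e 0 * e 0 = e 0 by rw [he0]; ring]; exact mem 0
    · show e 0 * e 1 ∈ Submodule.span ℚ (Set.range e)
      rw [show e 0 * e 1 = e 1 by rw [he0]; ring]; exact mem 1
    · show e 0 * e 2 ∈ Submodule.span ℚ (Set.range e)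
      rw [show e 0 * e 2 = e 2 by rw [he0]; ring]; exact mem 2
    · show e 0 * e 3 ∈ Submodule.span ℚ (Set.range e)
      rw [show e 0 * e 3 = e 3 by rw [he0]; ring]; exact mem 3
    · show e 1 * e 0 ∈ Submodule.span ℚ (Set.range e)
      rw [show e 1 * e 0 = e 1 by rw [he0]; ring]; exact mem 1
    · show e 1 * e 1 ∈ Submodule.span ℚ (Set.range e)
      rw [show e 1 * e 1 = ((p : ℚ) : K) * e 0 by rw [he1, hppK]]; exact memc _ 0
    · show e 1 * e 2 ∈ Submodule.span ℚ (Set.range e)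
      rw [show e 1 * e 2 = e 3 by rw [he1, he2, he3]]; exact mem 3
    · show e 1 * e 3 ∈ Submodule.span ℚ (Set.range e)
      rw [show e 1 * e 3 = ((p : ℚ) : K) * e 2 by
        rw [he1, he3, he2]; push_cast; rw [← hsp]; ring]; exact memc _ 2
    · show e 2 * e 0 ∈ Submodule.span ℚ (Set.range e)
      rw [show e 2 * e 0 = e 2 by rw [he0]; ring]; exact mem 2
    · show e 2 * e 1 ∈ Submodule.span ℚ (Set.range e)
      rw [show e 2 * e 1 = e 3 by rw [he1, he2, he3]; ring]; exact mem 3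
    · show e 2 * e 2 ∈ Submodule.span ℚ (Set.range e)
      rw [show e 2 * e 2 = ((q : ℚ) : K) * e 0 by rw [he2, hqqK]]; exact memc _ 0
    · show e 2 * e 3 ∈ Submodule.span ℚ (Set.range e)
      rw [show e 2 * e 3 = ((q : ℚ) : K) * e 1 by
        rw [he1, he2, he3]; push_cast; rw [← hsq]; ring]; exact memc _ 1
    · show e 3 * e 0 ∈ Submodule.span ℚ (Set.range e)
      rw [show e 3 * e 0 = e 3 by rw [he0]; ring]; exact mem 3
    · show e 3 * e 1 ∈ Submodule.span ℚ (Set.range e)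
      rw [show e 3 * e 1 = ((p : ℚ) : K) * e 2 by
        rw [he1, he2, he3]; push_cast; rw [← hsp]; ring]; exact memc _ 2
    · show e 3 * e 2 ∈ Submodule.span ℚ (Set.range e)
      rw [show e 3 * e 2 = ((q : ℚ) : K) * e 1 by
        rw [he1, he2, he3]; push_cast; rw [← hsq]; ring]; exact memc _ 1
    · show e 3 * e 3 ∈ Submodule.span ℚ (Set.range e)
      rw [show e 3 * e 3 = ((p * q : ℚ) : K) * e 0 by
        rw [he0, he3]; push_cast; rw [← hsp, ← hsq]; ring]; exact memc _ 0
  have hmulspan : ∀ u ∈ Submodule.span ℚ (Set.range e), ∀ v ∈ Submodule.span ℚ (Set.range e),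
      u * v ∈ Submodule.span ℚ (Set.range e) := by
    intro u hu
    induction hu using Submodule.span_induction with
    | mem a ha =>
      intro v hv
      induction hv using Submodule.span_induction with
      | mem c hc =>
        obtain ⟨i, rfl⟩ := ha; obtain ⟨j, rfl⟩ := hc
        exact hprod i j
      | zero => rw [mul_zero]; exact Submodule.zero_mem _
      | add c d _ _ hc hd => rw [mul_add]; exact Submodule.add_mem _ hc hd
      | smul t c _ hc => rw [mul_smul_comm]; exact Submodule.smul_mem _ _ hc
    | zero => intro v hv; rw [zero_mul]; exact Submodule.zero_mem _
    | add a c _ _ ha hc => intro v hv; rw [add_mul]; exact Submodule.add_mem _ (ha v hv) (hc v hv)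
    | smul t a _ ha => intro v hv; rw [smul_mul_assoc]; exact Submodule.smul_mem _ _ (ha v hv)
  have hspan : ⊤ ≤ Submodule.span ℚ (Set.range e) := by
    intro x hxtop
    clear hxtop
    have hx : x ∈ Algebra.adjoin ℚ ({sp, sq} : Set K) := hgen ▸ trivial
    induction hx using Algebra.adjoin_induction with
    | mem y hy =>
      rcases hy with h | h
      · subst h; exact Submodule.subset_span ⟨1, rfl⟩
      · rw [Set.mem_singleton_iff] at h; subst h; exact Submodule.subset_span ⟨2, rfl⟩
    | algebraMap u =>
      rw [show (algebraMap ℚ K) u = (u : ℚ) • e 0 by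
        simp [he, Algebra.algebraMap_eq_smul_one]]
      exact Submodule.smul_mem _ _ (Submodule.subset_span ⟨0, rfl⟩)
    | add u v _ _ hu hv => exact Submodule.add_mem _ hu hv
    | mul u v _ _ hu hv => exact hmulspan u hu v hv
  let b : Module.Basis (Fin 4) ℚ K := basisOfTopLeSpanOfCardEqFinrank e hspan (by rw [hdeg]; simp)
  have hb : ∀ i, b i = e i := fun i => by
    simp only [b, coe_basisOfTopLeSpanOfCardEqFinrank]
  have hb0 : b 0 = 1 := hb 0
  have hb1 : b 1 = sp := hb 1
  have hb2 : b 2 = sq := hb 2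
  have hb3 : b 3 = sp * sq := hb 3
  -- ## The automorphism σ1 : sp ↦ -sp, sq ↦ sq
  let f1 : Fin 4 → K := ![1, -sp, sq, -(sp*sq)]
  let T1 : K →ₗ[ℚ] K := b.constr ℚ f1
  have T1b : ∀ i, T1 (b i) = f1 i := fun i => b.constr_basis ℚ f1 i
  have T1b0 : T1 1 = 1 := by have h := T1b 0; rw [hb0] at h; exact h
  have T1b1 : T1 sp = -sp := by have h := T1b 1; rw [hb1] at h; exact h
  have T1b2 : T1 sq = sq := by have h := T1b 2; rw [hb2] at h; exact h
  have T1b3 : T1 (sp * sq) = -(sp * sq) := by have h := T1b 3; rw [hb3] at h; exact h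
  have T1cast : ∀ (u : ℚ) (x : K), T1 ((u : K) * x) = (u : K) * T1 x := by
    intro u x
    rw [← Rat.smul_def, map_smul, Rat.smul_def]
  have T1cast1 : ∀ u : ℚ, T1 ((u : K)) = (u : K) := by
    intro u
    rw [show ((u : K)) = (u : K) * 1 by ring, T1cast, T1b0, mul_one]
  have T1mul : ∀ x y : K, T1 (x * y) = T1 x * T1 y := by
    have key : ((LinearMap.mul ℚ K).compr₂ T1) = (LinearMap.mul ℚ K).compl₁₂ T1 T1 := by
      apply b.ext; intro i
      apply b.ext; intro j
      simp only [LinearMap.compr₂_apply, LinearMap.compl₁₂_apply, LinearMap.mul_apply']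
      fin_cases i <;> fin_cases j <;> simp only [hb]
      · show T1 ((1:K) * (1:K)) = T1 1 * T1 1
        rw [one_mul, T1b0, one_mul]
      · show T1 ((1:K) * sp) = T1 1 * T1 sp
        rw [one_mul, T1b0, one_mul]
      · show T1 ((1:K) * sq) = T1 1 * T1 sq
        rw [one_mul, T1b0, one_mul]
      · show T1 ((1:K) * (sp*sq)) = T1 1 * T1 (sp*sq)
        rw [one_mul, T1b0, one_mul]
      · show T1 (sp * (1:K)) = T1 sp * T1 1
        rw [mul_one, T1b0, mul_one]
      · show T1 (sp * sp) = T1 sp * T1 sp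
        rw [show sp * sp = ((p:ℚ):K) by push_cast; rw [← hsp]; ring, T1cast1, T1b1]
        first
        | ring1
        | (push_cast
           first
           | linear_combination -hsp
           | linear_combination hsp
           | linear_combination -hsq
           | linear_combination hsq
           | linear_combination sq * hsp
           | linear_combination -sq * hsp
           | linear_combination sp * hsq
           | linear_combination -sp * hsq
           | linear_combination (sq^2) * hsp + (p:K) * hsq
           | linear_combination -(sq^2) * hsp - (p:K) * hsq
           | linear_combination (sq^2) * hsp - (p:K) * hsq
           | linear_combination -(sq^2) * hsp + (p:K) * hsq)
      · show T1 (sp * sq) = T1 sp * T1 sq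
        rw [T1b3, T1b1, T1b2]; ring
      · show T1 (sp * (sp*sq)) = T1 sp * T1 (sp*sq)
        rw [show sp * (sp * sq) = ((p:ℚ):K) * sq by push_cast; rw [← hsp]; ring,
          T1cast, T1b2, T1b1, T1b3]
        first
        | ring1
        | (push_cast
           first
           | linear_combination -hsp
           | linear_combination hsp
           | linear_combination -hsq
           | linear_combination hsq
           | linear_combination sq * hsp
           | linear_combination -sq * hsp
           | linear_combination sp * hsq
           | linear_combination -sp * hsq
           | linear_combination (sq^2) * hsp + (p:K) * hsq
           | linear_combination -(sq^2) * hsp - (p:K) * hsq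
           | linear_combination (sq^2) * hsp - (p:K) * hsq
           | linear_combination -(sq^2) * hsp + (p:K) * hsq)
      · show T1 (sq * (1:K)) = T1 sq * T1 1
        rw [mul_one, T1b0, mul_one]
      · show T1 (sq * sp) = T1 sq * T1 sp
        rw [show sq * sp = sp * sq from mul_comm _ _, T1b3, T1b1, T1b2]; ring
      · show T1 (sq * sq) = T1 sq * T1 sq
        rw [show sq * sq = ((q:ℚ):K) by push_cast; rw [← hsq]; ring, T1cast1, T1b2]
        first
        | ring1
        | (push_cast
           first
           | linear_combination -hsp
           | linear_combination hsp
           | linear_combination -hsq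
           | linear_combination hsq
           | linear_combination sq * hsp
           | linear_combination -sq * hsp
           | linear_combination sp * hsq
           | linear_combination -sp * hsq
           | linear_combination (sq^2) * hsp + (p:K) * hsq
           | linear_combination -(sq^2) * hsp - (p:K) * hsq
           | linear_combination (sq^2) * hsp - (p:K) * hsq
           | linear_combination -(sq^2) * hsp + (p:K) * hsq)
      · show T1 (sq * (sp*sq)) = T1 sq * T1 (sp*sq)
        rw [show sq * (sp * sq) = ((q:ℚ):K) * sp by push_cast; rw [← hsq]; ring,
          T1cast, T1b1, T1b2, T1b3]
        first
        | ring1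
        | (push_cast
           first
           | linear_combination -hsp
           | linear_combination hsp
           | linear_combination -hsq
           | linear_combination hsq
           | linear_combination sq * hsp
           | linear_combination -sq * hsp
           | linear_combination sp * hsq
           | linear_combination -sp * hsq
           | linear_combination (sq^2) * hsp + (p:K) * hsq
           | linear_combination -(sq^2) * hsp - (p:K) * hsq
           | linear_combination (sq^2) * hsp - (p:K) * hsq
           | linear_combination -(sq^2) * hsp + (p:K) * hsq)
      · show T1 ((sp*sq) * (1:K)) = T1 (sp*sq) * T1 1
        rw [mul_one, T1b0, mul_one]
      · show T1 ((sp*sq) * sp) = T1 (sp*sq) * T1 sp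
        rw [show sp * sq * sp = ((p:ℚ):K) * sq by push_cast; rw [← hsp]; ring,
          T1cast, T1b2, T1b1, T1b3]
        first
        | ring1
        | (push_cast
           first
           | linear_combination -hsp
           | linear_combination hsp
           | linear_combination -hsq
           | linear_combination hsq
           | linear_combination sq * hsp
           | linear_combination -sq * hsp
           | linear_combination sp * hsq
           | linear_combination -sp * hsq
           | linear_combination (sq^2) * hsp + (p:K) * hsq
           | linear_combination -(sq^2) * hsp - (p:K) * hsq
           | linear_combination (sq^2) * hsp - (p:K) * hsq
           | linear_combination -(sq^2) * hsp + (p:K) * hsq)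
      · show T1 ((sp*sq) * sq) = T1 (sp*sq) * T1 sq
        rw [show sp * sq * sq = ((q:ℚ):K) * sp by push_cast; rw [← hsq]; ring,
          T1cast, T1b1, T1b2, T1b3]
        first
        | ring1
        | (push_cast
           first
           | linear_combination -hsp
           | linear_combination hsp
           | linear_combination -hsq
           | linear_combination hsq
           | linear_combination sq * hsp
           | linear_combination -sq * hsp
           | linear_combination sp * hsq
           | linear_combination -sp * hsq
           | linear_combination (sq^2) * hsp + (p:K) * hsq
           | linear_combination -(sq^2) * hsp - (p:K) * hsq
           | linear_combination (sq^2) * hsp - (p:K) * hsq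
           | linear_combination -(sq^2) * hsp + (p:K) * hsq)
      · show T1 ((sp*sq) * (sp*sq)) = T1 (sp*sq) * T1 (sp*sq)
        rw [show sp * sq * (sp * sq) = ((p:ℚ):K) * (((q:ℚ):K) * 1) by
          push_cast; rw [← hsp, ← hsq]; ring, T1cast, T1cast, T1b0, T1b3]
        first
        | ring1
        | (push_cast
           first
           | linear_combination -hsp
           | linear_combination hsp
           | linear_combination -hsq
           | linear_combination hsq
           | linear_combination sq * hsp
           | linear_combination -sq * hsp
           | linear_combination sp * hsq
           | linear_combination -sp * hsq
           | linear_combination (sq^2) * hsp + (p:K) * hsq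
           | linear_combination -(sq^2) * hsp - (p:K) * hsq
           | linear_combination (sq^2) * hsp - (p:K) * hsq
           | linear_combination -(sq^2) * hsp + (p:K) * hsq)
    intro x y
    have h := LinearMap.congr_fun (LinearMap.congr_fun key x) y
    simpa using h
  -- ## The automorphism σ2 : sp ↦ sp, sq ↦ -sq
  let f2 : Fin 4 → K := ![1, sp, -sq, -(sp*sq)]
  let T2 : K →ₗ[ℚ] K := b.constr ℚ f2
  have T2b : ∀ i, T2 (b i) = f2 i := fun i => b.constr_basis ℚ f2 i
  have T2b0 : T2 1 = 1 := by have h := T2b 0; rw [hb0] at h; exact h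
  have T2b1 : T2 sp = sp := by have h := T2b 1; rw [hb1] at h; exact h
  have T2b2 : T2 sq = -sq := by have h := T2b 2; rw [hb2] at h; exact h
  have T2b3 : T2 (sp * sq) = -(sp * sq) := by have h := T2b 3; rw [hb3] at h; exact h
  have T2cast : ∀ (u : ℚ) (x : K), T2 ((u : K) * x) = (u : K) * T2 x := by
    intro u x
    rw [← Rat.smul_def, map_smul, Rat.smul_def]
  have T2cast1 : ∀ u : ℚ, T2 ((u : K)) = (u : K) := by
    intro u
    rw [show ((u : K)) = (u : K) * 1 by ring, T2cast, T2b0, mul_one]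
  have T2mul : ∀ x y : K, T2 (x * y) = T2 x * T2 y := by
    have key : ((LinearMap.mul ℚ K).compr₂ T2) = (LinearMap.mul ℚ K).compl₁₂ T2 T2 := by
      apply b.ext; intro i
      apply b.ext; intro j
      simp only [LinearMap.compr₂_apply, LinearMap.compl₁₂_apply, LinearMap.mul_apply']
      fin_cases i <;> fin_cases j <;> simp only [hb]
      · show T2 ((1:K) * (1:K)) = T2 1 * T2 1
        rw [one_mul, T2b0, one_mul]
      · show T2 ((1:K) * sp) = T2 1 * T2 sp
        rw [one_mul, T2b0, one_mul]
      · show T2 ((1:K) * sq) = T2 1 * T2 sq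
        rw [one_mul, T2b0, one_mul]
      · show T2 ((1:K) * (sp*sq)) = T2 1 * T2 (sp*sq)
        rw [one_mul, T2b0, one_mul]
      · show T2 (sp * (1:K)) = T2 sp * T2 1
        rw [mul_one, T2b0, mul_one]
      · show T2 (sp * sp) = T2 sp * T2 sp
        rw [show sp * sp = ((p:ℚ):K) by push_cast; rw [← hsp]; ring, T2cast1, T2b1]
        first
        | ring1
        | (push_cast
           first
           | linear_combination -hsp
           | linear_combination hsp
           | linear_combination -hsq
           | linear_combination hsq
           | linear_combination sq * hsp
           | linear_combination -sq * hsp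
           | linear_combination sp * hsq
           | linear_combination -sp * hsq
           | linear_combination (sq^2) * hsp + (p:K) * hsq
           | linear_combination -(sq^2) * hsp - (p:K) * hsq
           | linear_combination (sq^2) * hsp - (p:K) * hsq
           | linear_combination -(sq^2) * hsp + (p:K) * hsq)
      · show T2 (sp * sq) = T2 sp * T2 sq
        rw [T2b3, T2b1, T2b2]; ring
      · show T2 (sp * (sp*sq)) = T2 sp * T2 (sp*sq)
        rw [show sp * (sp * sq) = ((p:ℚ):K) * sq by push_cast; rw [← hsp]; ring,
          T2cast, T2b2, T2b1, T2b3]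
        first
        | ring1
        | (push_cast
           first
           | linear_combination -hsp
           | linear_combination hsp
           | linear_combination -hsq
           | linear_combination hsq
           | linear_combination sq * hsp
           | linear_combination -sq * hsp
           | linear_combination sp * hsq
           | linear_combination -sp * hsq
           | linear_combination (sq^2) * hsp + (p:K) * hsq
           | linear_combination -(sq^2) * hsp - (p:K) * hsq
           | linear_combination (sq^2) * hsp - (p:K) * hsq
           | linear_combination -(sq^2) * hsp + (p:K) * hsq)
      · show T2 (sq * (1:K)) = T2 sq * T2 1
        rw [mul_one, T2b0, mul_one]
      · show T2 (sq * sp) = T2 sq * T2 sp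
        rw [show sq * sp = sp * sq from mul_comm _ _, T2b3, T2b1, T2b2]; ring
      · show T2 (sq * sq) = T2 sq * T2 sq
        rw [show sq * sq = ((q:ℚ):K) by push_cast; rw [← hsq]; ring, T2cast1, T2b2]
        first
        | ring1
        | (push_cast
           first
           | linear_combination -hsp
           | linear_combination hsp
           | linear_combination -hsq
           | linear_combination hsq
           | linear_combination sq * hsp
           | linear_combination -sq * hsp
           | linear_combination sp * hsq
           | linear_combination -sp * hsq
           | linear_combination (sq^2) * hsp + (p:K) * hsq
           | linear_combination -(sq^2) * hsp - (p:K) * hsq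
           | linear_combination (sq^2) * hsp - (p:K) * hsq
           | linear_combination -(sq^2) * hsp + (p:K) * hsq)
      · show T2 (sq * (sp*sq)) = T2 sq * T2 (sp*sq)
        rw [show sq * (sp * sq) = ((q:ℚ):K) * sp by push_cast; rw [← hsq]; ring,
          T2cast, T2b1, T2b2, T2b3]
        first
        | ring1
        | (push_cast
           first
           | linear_combination -hsp
           | linear_combination hsp
           | linear_combination -hsq
           | linear_combination hsq
           | linear_combination sq * hsp
           | linear_combination -sq * hsp
           | linear_combination sp * hsq
           | linear_combination -sp * hsq
           | linear_combination (sq^2) * hsp + (p:K) * hsq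
           | linear_combination -(sq^2) * hsp - (p:K) * hsq
           | linear_combination (sq^2) * hsp - (p:K) * hsq
           | linear_combination -(sq^2) * hsp + (p:K) * hsq)
      · show T2 ((sp*sq) * (1:K)) = T2 (sp*sq) * T2 1
        rw [mul_one, T2b0, mul_one]
      · show T2 ((sp*sq) * sp) = T2 (sp*sq) * T2 sp
        rw [show sp * sq * sp = ((p:ℚ):K) * sq by push_cast; rw [← hsp]; ring,
          T2cast, T2b2, T2b1, T2b3]
        first
        | ring1
        | (push_cast
           first
           | linear_combination -hsp
           | linear_combination hsp
           | linear_combination -hsq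
           | linear_combination hsq
           | linear_combination sq * hsp
           | linear_combination -sq * hsp
           | linear_combination sp * hsq
           | linear_combination -sp * hsq
           | linear_combination (sq^2) * hsp + (p:K) * hsq
           | linear_combination -(sq^2) * hsp - (p:K) * hsq
           | linear_combination (sq^2) * hsp - (p:K) * hsq
           | linear_combination -(sq^2) * hsp + (p:K) * hsq)
      · show T2 ((sp*sq) * sq) = T2 (sp*sq) * T2 sq
        rw [show sp * sq * sq = ((q:ℚ):K) * sp by push_cast; rw [← hsq]; ring,
          T2cast, T2b1, T2b2, T2b3]
        first
        | ring1
        | (push_cast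
           first
           | linear_combination -hsp
           | linear_combination hsp
           | linear_combination -hsq
           | linear_combination hsq
           | linear_combination sq * hsp
           | linear_combination -sq * hsp
           | linear_combination sp * hsq
           | linear_combination -sp * hsq
           | linear_combination (sq^2) * hsp + (p:K) * hsq
           | linear_combination -(sq^2) * hsp - (p:K) * hsq
           | linear_combination (sq^2) * hsp - (p:K) * hsq
           | linear_combination -(sq^2) * hsp + (p:K) * hsq)
      · show T2 ((sp*sq) * (sp*sq)) = T2 (sp*sq) * T2 (sp*sq)
        rw [show sp * sq * (sp * sq) = ((p:ℚ):K) * (((q:ℚ):K) * 1) by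
          push_cast; rw [← hsp, ← hsq]; ring, T2cast, T2cast, T2b0, T2b3]
        first
        | ring1
        | (push_cast
           first
           | linear_combination -hsp
           | linear_combination hsp
           | linear_combination -hsq
           | linear_combination hsq
           | linear_combination sq * hsp
           | linear_combination -sq * hsp
           | linear_combination sp * hsq
           | linear_combination -sp * hsq
           | linear_combination (sq^2) * hsp + (p:K) * hsq
           | linear_combination -(sq^2) * hsp - (p:K) * hsq
           | linear_combination (sq^2) * hsp - (p:K) * hsq
           | linear_combination -(sq^2) * hsp + (p:K) * hsq)
    intro x y
    have h := LinearMap.congr_fun (LinearMap.congr_fun key x) y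
    simpa using h
  -- integrality is preserved by T1 and T2
  have hint1 : ∀ w : K, IsIntegral ℤ w → IsIntegral ℤ (T1 w) := by
    intro w hw
    let R1 : K →+* K :=
      { toFun := T1, map_one' := T1b0, map_mul' := T1mul,
        map_zero' := map_zero T1, map_add' := map_add T1 }
    exact hw.map R1.toIntAlgHom
  have hint2 : ∀ w : K, IsIntegral ℤ w → IsIntegral ℤ (T2 w) := by
    intro w hw
    let R2 : K →+* K :=
      { toFun := T2, map_one' := T2b0, map_mul' := T2mul,
        map_zero' := map_zero T2, map_add' := map_add T2 }
    exact hw.map R2.toIntAlgHom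
  have T1val : ∀ x0 x1 x2 x3 : ℚ,
      T1 ((x0:K) + (x1:K)*sp + (x2:K)*sq + (x3:K)*(sp*sq))
        = (x0:K) - (x1:K)*sp + (x2:K)*sq - (x3:K)*(sp*sq) := by
    intro x0 x1 x2 x3
    rw [map_add, map_add, map_add, T1cast1, T1cast, T1cast, T1cast, T1b1, T1b2, T1b3]
    ring
  have T2val : ∀ x0 x1 x2 x3 : ℚ,
      T2 ((x0:K) + (x1:K)*sp + (x2:K)*sq + (x3:K)*(sp*sq))
        = (x0:K) + (x1:K)*sp - (x2:K)*sq - (x3:K)*(sp*sq) := by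
    intro x0 x1 x2 x3
    rw [map_add, map_add, map_add, T2cast1, T2cast, T2cast, T2cast, T2b1, T2b2, T2b3]
    ring
  -- ## Basic integral elements
  have hintcast : ∀ m : ℤ, IsIntegral ℤ ((m : K)) := by
    intro m
    have : (algebraMap ℤ K) m = (m : K) := by simp [algebraMap_int_eq]
    rw [← this]
    exact isIntegral_algebraMap
  have hintnat : ∀ m : ℕ, IsIntegral ℤ ((m : K)) := by
    intro m
    have := hintcast (m : ℤ)
    rwa [Int.cast_natCast] at this
  have hintsp : IsIntegral ℤ sp := by
    apply IsIntegral.of_pow (n := 2) (by norm_num)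
    rw [hsp]; exact hintnat p
  have hintsq : IsIntegral ℤ sq := by
    apply IsIntegral.of_pow (n := 2) (by norm_num)
    rw [hsq]; exact hintnat q
  have hintsr : IsIntegral ℤ sr := by
    apply IsIntegral.of_pow (n := 2) (by norm_num)
    rw [hsr2']; exact hintnat r
  have hintt : IsIntegral ℤ ((sp + sr) / 2) := by
    apply IsIntegral.of_pow (n := 2) (by norm_num)
    have hteq : ((sp + sr) / 2) ^ 2 = (mm : K) + (mp : K) * sq := by
      have h4 : ((p : K) + (r : K)) = 4 * (mm : K) := by
        rw [show ((p:K) + (r:K)) = ((p + r : ℕ) : K) by push_cast; ring, hmm]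
        push_cast; ring
      have hp' : (p' : K) = 2 * (mp : K) := by rw [hmp]; push_cast; ring
      field_simp
      linear_combination hsp + hsr2' + 2 * hspsr + h4 + 2 * sq * hp' - 4 * ((mm:K) + (mp:K)*sq) + 4*((mm:K) + (mp:K)*sq)
    rw [hteq]
    exact (hintnat mm).add ((hintnat mp).mul hintsq)
  intro z
  constructor
  · -- ## Forward direction: an integral element lies in the lattice
    intro hzint
    set x0 : ℚ := b.repr z 0 with hx0def
    set x1 : ℚ := b.repr z 1 with hx1def
    set x2 : ℚ := b.repr z 2 with hx2def
    set x3 : ℚ := b.repr z 3 with hx3def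
    have hzrep : z = (x0:K) + (x1:K)*sp + (x2:K)*sq + (x3:K)*(sp*sq) := by
      have h := (b.sum_repr z).symm
      rw [Fin.sum_univ_four] at h
      rw [hb0, hb1, hb2, hb3] at h
      rw [h, Rat.smul_def, Rat.smul_def, Rat.smul_def, Rat.smul_def]
      ring
    clear_value x0 x1 x2 x3
    have h1z : T1 z = (x0:K) - (x1:K)*sp + (x2:K)*sq - (x3:K)*(sp*sq) := by
      rw [hzrep]; exact T1val x0 x1 x2 x3
    have h2z : T2 z = (x0:K) + (x1:K)*sp - (x2:K)*sq - (x3:K)*(sp*sq) := by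
      rw [hzrep]; exact T2val x0 x1 x2 x3
    have h21z : T2 (T1 z) = (x0:K) - (x1:K)*sp - (x2:K)*sq + (x3:K)*(sp*sq) := by
      rw [h1z]
      have := T2val x0 (-x1) x2 (-x3)
      push_cast at this ⊢
      rw [show (x0:K) - (x1:K)*sp + (x2:K)*sq - (x3:K)*(sp*sq)
          = (x0:K) + (-(x1:K))*sp + (x2:K)*sq + (-(x3:K))*(sp*sq) by ring, this]
      ring
    have h12z : T1 (T2 z) = (x0:K) - (x1:K)*sp - (x2:K)*sq + (x3:K)*(sp*sq) := by
      rw [h2z]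
      have := T1val x0 x1 (-x2) (-x3)
      push_cast at this ⊢
      rw [show (x0:K) + (x1:K)*sp - (x2:K)*sq - (x3:K)*(sp*sq)
          = (x0:K) + (x1:K)*sp + (-(x2:K))*sq + (-(x3:K))*(sp*sq) by ring, this]
      ring
    -- Trace-type conditions
    obtain ⟨⟨A, hA⟩, ⟨C, hC⟩⟩ := quad_K' sq q hq (Or.inr hq4) hsq (2*x0) (2*x2)
      (by
        have h := hzint.add (hint1 z hzint)
        have heq : z + T1 z = ((2*x0 : ℚ):K) + ((2*x2 : ℚ):K) * sq := by
          rw [h1z, hzrep]; push_cast; ring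
        rwa [heq] at h)
      (by
        have h := (hint2 z hzint).add (hint2 (T1 z) (hint1 z hzint))
        have heq : T2 z + T2 (T1 z) = ((2*x0 : ℚ):K) - ((2*x2 : ℚ):K) * sq := by
          rw [h2z, h21z]; push_cast; ring
        rwa [heq] at h)
    obtain ⟨_, ⟨B, hB⟩⟩ := quad_K' sp p hp (Or.inl hp4) hsp (2*x0) (2*x1)
      (by
        have h := hzint.add (hint2 z hzint)
        have heq : z + T2 z = ((2*x0 : ℚ):K) + ((2*x1 : ℚ):K) * sp := by
          rw [h2z, hzrep]; push_cast; ring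
        rwa [heq] at h)
      (by
        have h := (hint1 z hzint).add (hint1 (T2 z) (hint2 z hzint))
        have heq : T1 z + T1 (T2 z) = ((2*x0 : ℚ):K) - ((2*x1 : ℚ):K) * sp := by
          rw [h1z, h12z]; push_cast; ring
        rwa [heq] at h)
    obtain ⟨_, ⟨D, hD⟩⟩ := quad_K' sr r hrsq (Or.inl hr4) hsr2' (2*x0) (2*(g:ℚ)*x3)
      (by
        have h := hzint.add (hint1 (T2 z) (hint2 z hzint))
        have heq : z + T1 (T2 z) = ((2*x0 : ℚ):K) + ((2*(g:ℚ)*x3 : ℚ):K) * sr := by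
          rw [h12z, hzrep]; push_cast
          linear_combination (-2*(x3:K)) * hsr
        rwa [heq] at h)
      (by
        have h := (hint1 z hzint).add (hint2 z hzint)
        have heq : T1 z + T2 z = ((2*x0 : ℚ):K) - ((2*(g:ℚ)*x3 : ℚ):K) * sr := by
          rw [h1z, h2z]; push_cast
          linear_combination (2*(x3:K)) * hsr
        rwa [heq] at h)
    -- Norm-type conditions
    obtain ⟨⟨m1, hm1⟩, _⟩ := quad_K' sq q hq (Or.inr hq4) hsq
      (x0^2 + q*x2^2 - p*x1^2 - p*q*x3^2) (2*x0*x2 - 2*x1*x3*p)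
      (by
        have h := hzint.mul (hint1 z hzint)
        have heq : z * T1 z
            = ((x0^2 + q*x2^2 - p*x1^2 - p*q*x3^2 : ℚ):K)
              + ((2*x0*x2 - 2*x1*x3*p : ℚ):K) * sq := by
          rw [h1z, hzrep]; push_cast
          linear_combination (-(x1:K)^2 - 2*(x1:K)*(x3:K)*sq - (q:K)*(x3:K)^2) * hsp
            + (-((x3:K)^2)*sp^2 + (x2:K)^2) * hsq
        rwa [heq] at h)
      (by
        have h := (hint2 z hzint).mul (hint2 (T1 z) (hint1 z hzint))
        have heq : T2 z * T2 (T1 z)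
            = ((x0^2 + q*x2^2 - p*x1^2 - p*q*x3^2 : ℚ):K)
              - ((2*x0*x2 - 2*x1*x3*p : ℚ):K) * sq := by
          rw [h2z, h21z]; push_cast
          linear_combination (-(x1:K)^2 + 2*(x1:K)*(x3:K)*sq - (q:K)*(x3:K)^2) * hsp
            + (-((x3:K)^2)*sp^2 + (x2:K)^2) * hsq
        rwa [heq] at h)
    obtain ⟨⟨m2, hm2⟩, _⟩ := quad_K' sp p hp (Or.inl hp4) hsp
      (x0^2 + p*x1^2 - q*x2^2 - p*q*x3^2) (2*x0*x1 - 2*x2*x3*q)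
      (by
        have h := hzint.mul (hint2 z hzint)
        have heq : z * T2 z
            = ((x0^2 + p*x1^2 - q*x2^2 - p*q*x3^2 : ℚ):K)
              + ((2*x0*x1 - 2*x2*x3*q : ℚ):K) * sp := by
          rw [h2z, hzrep]; push_cast
          linear_combination ((x1:K)^2 - (q:K)*(x3:K)^2) * hsp
            + (-(x2:K)^2 - (x3:K)^2*sp^2 - 2*(x2:K)*(x3:K)*sp) * hsq
        rwa [heq] at h)
      (by
        have h := (hint1 z hzint).mul (hint1 (T2 z) (hint2 z hzint))
        have heq : T1 z * T1 (T2 z)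
            = ((x0^2 + p*x1^2 - q*x2^2 - p*q*x3^2 : ℚ):K)
              - ((2*x0*x1 - 2*x2*x3*q : ℚ):K) * sp := by
          rw [h1z, h12z]; push_cast
          linear_combination ((x1:K)^2 - (q:K)*(x3:K)^2) * hsp
            + (-(x2:K)^2 - (x3:K)^2*sp^2 + 2*(x2:K)*(x3:K)*sp) * hsq
        rwa [heq] at h)
    -- pass to integer arithmetic
    have hpqrQ : (p:ℚ) * (q:ℚ) = (r:ℚ) * (g:ℚ)^2 := by exact_mod_cast congrArg (Nat.cast : ℕ → ℚ) hpqr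
    have E1 : (A:ℤ)^2 + (q:ℤ)*C^2 - (p:ℤ)*B^2 - (r:ℤ)*D^2 = 4*m1 := by
      have hQ : (A:ℚ)^2 + (q:ℚ)*(C:ℚ)^2 - (p:ℚ)*(B:ℚ)^2 - (r:ℚ)*(D:ℚ)^2 = 4*(m1:ℚ) := by
        linear_combination 4*hm1 - ((A:ℚ) + 2*x0)*hA - (q:ℚ)*((C:ℚ) + 2*x2)*hC
          + (p:ℚ)*((B:ℚ) + 2*x1)*hB + (r:ℚ)*((D:ℚ) + 2*(g:ℚ)*x3)*hD + 4*x3^2*hpqrQ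
      exact_mod_cast hQ
    have E2 : (A:ℤ)^2 + (p:ℤ)*B^2 - (q:ℤ)*C^2 - (r:ℤ)*D^2 = 4*m2 := by
      have hQ : (A:ℚ)^2 + (p:ℚ)*(B:ℚ)^2 - (q:ℚ)*(C:ℚ)^2 - (r:ℚ)*(D:ℚ)^2 = 4*(m2:ℚ) := by
        linear_combination 4*hm2 - ((A:ℚ) + 2*x0)*hA + (q:ℚ)*((C:ℚ) + 2*x2)*hC
          - (p:ℚ)*((B:ℚ) + 2*x1)*hB + (r:ℚ)*((D:ℚ) + 2*(g:ℚ)*x3)*hD + 4*x3^2*hpqrQ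
      exact_mod_cast hQ
    -- parity arguments
    have hp4' : (p:ℤ) % 4 = 2 := by omega
    have hq2' : (q:ℤ) % 2 = 1 := by omega
    have hr4' : (r:ℤ) % 4 = 2 := by omega
    obtain ⟨p2, hp2a, hp2b⟩ : ∃ p2 : ℤ, (p:ℤ) = 2*p2 ∧ p2 % 2 = 1 := ⟨(p:ℤ)/2, by omega, by omega⟩
    obtain ⟨r2, hr2a, hr2b⟩ : ∃ r2 : ℤ, (r:ℤ) = 2*r2 ∧ r2 % 2 = 1 := ⟨(r:ℤ)/2, by omega, by omega⟩
    have hevenA : Even A := by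
      have h1 : A^2 - (r:ℤ)*D^2 = 2*(m1+m2) := by linarith [E1, E2]
      have h2 : Even (A^2 - (r:ℤ)*D^2) := ⟨m1+m2, by linarith⟩
      have h3 : Even ((r:ℤ)*D^2) := ⟨r2*D^2, by rw [hr2a]; ring⟩
      have h4 : Even (A^2) := (Int.even_sub.mp h2).mpr h3
      exact (Int.even_pow.mp h4).1
    have hevenC : Even C := by
      have h1 : (q:ℤ)*C^2 - (p:ℤ)*B^2 = 2*(m1-m2) := by linarith [E1, E2]
      have h2 : Even ((q:ℤ)*C^2 - (p:ℤ)*B^2) := ⟨m1-m2, by linarith⟩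
      have h3 : Even ((p:ℤ)*B^2) := ⟨p2*B^2, by rw [hp2a]; ring⟩
      have h4 : Even ((q:ℤ)*C^2) := (Int.even_sub.mp h2).mpr h3
      rcases Int.even_mul.mp h4 with h | h
      · exfalso; rw [Int.even_iff] at h; omega
      · exact (Int.even_pow.mp h).1
    obtain ⟨A', hA'⟩ := hevenA
    obtain ⟨C', hC'⟩ := hevenC
    have hBD : Even (B - D) := by
      have h1 : p2*B^2 + r2*D^2 = 2*(A'*A' + (q:ℤ)*(C'*C') - m1) := by
        apply mul_left_cancel₀ (show (2:ℤ) ≠ 0 by norm_num)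
        linear_combination -E1 - B^2*hp2a - D^2*hr2a + ((A:ℤ) + A' + A')*hA'
          + (q:ℤ)*((C:ℤ) + C' + C')*hC'
      have h2 : Even (p2*B^2 + r2*D^2) := ⟨A'*A' + (q:ℤ)*(C'*C') - m1, by linarith⟩
      have h3 : Even (p2*B^2) ↔ Even (r2*D^2) := Int.even_add.mp h2
      have h4 : Even (B^2) ↔ Even (D^2) := by
        constructor
        · intro h
          have := h3.mp (h.mul_left p2)
          rcases Int.even_mul.mp this with hh | hh
          · exfalso; rw [Int.even_iff] at hh; omega
          · exact hh
        · intro h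
          have := h3.mpr (h.mul_left r2)
          rcases Int.even_mul.mp this with hh | hh
          · exfalso; rw [Int.even_iff] at hh; omega
          · exact hh
      rw [Int.even_sub]
      rw [Int.even_pow, Int.even_pow] at h4
      constructor
      · intro h; exact (h4.mp ⟨h, by norm_num⟩).1
      · intro h; exact (h4.mpr ⟨h, by norm_num⟩).1
    obtain ⟨F, hF⟩ : ∃ F : ℤ, B - D = 2*F := by
      obtain ⟨F, hF⟩ := hBD; exact ⟨F, by omega⟩
    -- assemble
    refine ⟨A', F, C', D, ?_⟩
    have k0 : ((x0:ℚ):K) = ((A':ℤ):K) := by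
      have hx : x0 = ((A':ℤ):ℚ) := by push_cast [hA'] at hA; push_cast; linarith
      rw [hx]; push_cast; ring
    have k2 : ((x2:ℚ):K) = ((C':ℤ):K) := by
      have hx : x2 = ((C':ℤ):ℚ) := by push_cast [hC'] at hC; push_cast; linarith
      rw [hx]; push_cast; ring
    have kB : 2*((x1:ℚ):K) = ((B:ℤ):K) := by
      have : (2*x1 : ℚ) = ((B:ℤ):ℚ) := by push_cast; push_cast at hB; linarith
      calc 2*((x1:ℚ):K) = (((2*x1 : ℚ)):K) := by push_cast; ring
      _ = ((B:ℤ):K) := by rw [this]; push_cast; ring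
    have kD : 2*(g:K)*((x3:ℚ):K) = ((D:ℤ):K) := by
      have : (2*(g:ℚ)*x3 : ℚ) = ((D:ℤ):ℚ) := hD
      calc 2*(g:K)*((x3:ℚ):K) = (((2*(g:ℚ)*x3 : ℚ)):K) := by push_cast; ring
      _ = ((D:ℤ):K) := by rw [this]; push_cast; ring
    have kF : ((B:ℤ):K) - ((D:ℤ):K) = 2*((F:ℤ):K) := by
      have h := congrArg (fun t : ℤ => (t : K)) hF
      push_cast at h
      linear_combination h
    rw [hzrep]
    refine mul_left_cancel₀ (show (2:K) ≠ 0 from two_ne_zero) ?_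
    linear_combination 2*k0 + 2*sq*k2 + sp*kB + sp*kF + sr*kD - 2*((x3:ℚ):K)*hsr
  · -- ## Backward direction
    rintro ⟨a, c, d, f, rfl⟩
    exact (((hintcast a).add ((hintcast c).mul hintsp)).add ((hintcast d).mul hintsq)).add
      ((hintcast f).mul hintt)
end

section
/- In the biquadratic field K = ℚ(√14, √91) (so r = 26), the element 26 + 5√26, which is indecomposable in the ring of integers of ℚ(√26), is decomposable in O_K^+: it equals (13 + (5/2)√14 + √91 + (5/2)√26) + (13 − (5/2)√14 − √91 + (5/2)√26), and both summands are totally positive algebraic integers of K. -/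
set_option maxHeartbeats 1000000 in
/-- In the biquadratic field `K = ℚ(√14, √91)` (so `r = 26`, with `√26 = √14·√91/7`),
the element `26 + 5√26`, which is indecomposable in the ring of integers `ℤ[√26]` of
`ℚ(√26)`, is decomposable in `𝓞 K⁺`: it equals
`(13 + (5/2)√14 + √91 + (5/2)√26) + (13 − (5/2)√14 − √91 + (5/2)√26)`, both summands lie
in `𝓞 K` (which has `ℤ`-basis `{1, √14, √91, (√14+√26)/2}`), and both are totally positive
(positive under all four real embeddings `√14 ↦ s√14`, `√91 ↦ t√91`, `√26 ↦ st√26`,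
`s, t ∈ {±1}`). -/
theorem stmt_13 (S14 S91 S26 : ℝ)
    (h14 : S14 = Real.sqrt 14) (h91 : S91 = Real.sqrt 91) (h26 : S26 = S14 * S91 / 7) :
    -- 26 + 5√26 is indecomposable in ℤ[√26]⁺ :
    (¬∃ a b c d : ℤ,
      (0 < (a : ℝ) + (b : ℝ) * S26 ∧ 0 < (a : ℝ) - (b : ℝ) * S26) ∧
      (0 < (c : ℝ) + (d : ℝ) * S26 ∧ 0 < (c : ℝ) - (d : ℝ) * S26) ∧
      (26 : ℤ) = a + c ∧ (5 : ℤ) = b + d) ∧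
    -- the decomposition in K :
    26 + 5 * S26 = (13 + (5/2) * S14 + S91 + (5/2) * S26)
      + (13 - (5/2) * S14 - S91 + (5/2) * S26) ∧
    -- both summands are algebraic integers of K :
    (∃ a b c d : ℤ, 13 + (5/2) * S14 + S91 + (5/2) * S26
      = (a : ℝ) + (b : ℝ) * S14 + (c : ℝ) * S91 + (d : ℝ) * ((S14 + S26) / 2)) ∧
    (∃ a b c d : ℤ, 13 - (5/2) * S14 - S91 + (5/2) * S26
      = (a : ℝ) + (b : ℝ) * S14 + (c : ℝ) * S91 + (d : ℝ) * ((S14 + S26) / 2)) ∧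
    -- both summands are totally positive :
    (∀ s t : ℝ, (s = 1 ∨ s = -1) → (t = 1 ∨ t = -1) →
      0 < 13 + s * (5/2) * S14 + t * S91 + s * t * (5/2) * S26) ∧
    (∀ s t : ℝ, (s = 1 ∨ s = -1) → (t = 1 ∨ t = -1) →
      0 < 13 - s * (5/2) * S14 - t * S91 + s * t * (5/2) * S26) := by

  have h14pos : 0 < S14 := by rw [h14]; positivity
  have h91pos : 0 < S91 := by rw [h91]; positivity
  have h26pos : 0 < S26 := by rw [h26]; positivity
  have h14sq : S14 ^ 2 = 14 := by rw [h14, Real.sq_sqrt]; norm_num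
  have h91sq : S91 ^ 2 = 91 := by rw [h91, Real.sq_sqrt]; norm_num
  have h26sq : S26 ^ 2 = 26 := by
    rw [h26]; field_simp; nlinarith [h14sq, h91sq]
  have b14l : 3.7416 < S14 := by nlinarith [h14sq, h14pos]
  have b14u : S14 < 3.7417 := by nlinarith [h14sq, h14pos]
  have b91l : 9.5393 < S91 := by nlinarith [h91sq, h91pos]
  have b91u : S91 < 9.5394 := by nlinarith [h91sq, h91pos]
  have b26l : 5.0990 < S26 := by nlinarith [h26sq, h26pos]
  have b26u : S26 < 5.0991 := by nlinarith [h26sq, h26pos]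
  refine ⟨?_, by ring, ⟨13, 0, 1, 5, by push_cast; ring⟩, ⟨13, -5, -1, 5, by push_cast; ring⟩,
    ?_, ?_⟩
  · rintro ⟨a, b, c, d, ⟨ha1, ha2⟩, ⟨hc1, hc2⟩, hac, hbd⟩
    have hapos : (0:ℤ) < a := by
      have : (0:ℝ) < a := by linarith
      exact_mod_cast this
    have hcpos : (0:ℤ) < c := by
      have : (0:ℝ) < c := by linarith
      exact_mod_cast this
    have haR : (a:ℝ) ≤ 25 := by exact_mod_cast (show a ≤ 25 by omega)
    have hcR : (c:ℝ) ≤ 25 := by exact_mod_cast (show c ≤ 25 by omega)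
    have hbub : b ≤ 4 := by
      by_contra h
      push_neg at h
      have hbR : (5:ℝ) ≤ (b:ℝ) := by exact_mod_cast h
      nlinarith [mul_le_mul_of_nonneg_right hbR h26pos.le]
    have hblb : 1 ≤ b := by
      by_contra h
      push_neg at h
      have hdR : (5:ℝ) ≤ (d:ℝ) := by exact_mod_cast (show (5:ℤ) ≤ d by omega)
      nlinarith [mul_le_mul_of_nonneg_right hdR h26pos.le]
    interval_cases b
    · have hd : d = 4 := by omega
      subst hd
      have ha' : (5:ℤ) < a := by
        have : (5:ℝ) < a := by push_cast at ha2 ⊢; linarith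
        exact_mod_cast this
      have hc' : (20:ℤ) < c := by
        have : (20:ℝ) < c := by push_cast at hc2 ⊢; linarith
        exact_mod_cast this
      omega
    · have hd : d = 3 := by omega
      subst hd
      have ha' : (10:ℤ) < a := by
        have : (10:ℝ) < a := by push_cast at ha2 ⊢; linarith
        exact_mod_cast this
      have hc' : (15:ℤ) < c := by
        have : (15:ℝ) < c := by push_cast at hc2 ⊢; linarith
        exact_mod_cast this
      omega
    · have hd : d = 2 := by omega
      subst hd
      have ha' : (15:ℤ) < a := by
        have : (15:ℝ) < a := by push_cast at ha2 ⊢; linarith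
        exact_mod_cast this
      have hc' : (10:ℤ) < c := by
        have : (10:ℝ) < c := by push_cast at hc2 ⊢; linarith
        exact_mod_cast this
      omega
    · have hd : d = 1 := by omega
      subst hd
      have ha' : (20:ℤ) < a := by
        have : (20:ℝ) < a := by push_cast at ha2 ⊢; linarith
        exact_mod_cast this
      have hc' : (5:ℤ) < c := by
        have : (5:ℝ) < c := by push_cast at hc2 ⊢; linarith
        exact_mod_cast this
      omega
  · rintro s t (rfl | rfl) (rfl | rfl) <;> norm_num <;> linarith
  · rintro s t (rfl | rfl) (rfl | rfl) <;> norm_num <;> linarith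
end

section
/- Let n ≥ 6 with p = (2n−1)(2n+1), q = (2n−1)(2n+3), r = (2n+1)(2n+3) squarefree, K = ℚ(√p, √q), ε_p = 2n+√p, ε_r = (2n+2)+√r. Then the element μ := (ε_p^{-1} + 1 − ε_q + ε_q ε_r)/(2n+1) = (n + 3/2) + (1/2)√p + (1/2)√q + (1/2)√r is a totally positive algebraic integer of K and is indecomposable in O_K^+. -/
/-- For the biquadratic field `K = ℚ(√p,√q)` of type (2) (with `p ≡ 3`, `q ≡ 1 mod 4`,
`r = pq/gcd(p,q)²`), an element `x + y√p + z√q + w√r` (rational coordinates) is an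
algebraic integer iff it lies in the `ℤ`-span of `{1, √p, (1+√q)/2, (√p+√r)/2}`. -/
def BiqIntegral (x y z w : ℚ) : Prop :=
  ∃ a b c d : ℤ, x = a + c/2 ∧ y = b + d/2 ∧ z = c/2 ∧ w = d/2

/-- `x + y√p + z√q + w√r` is totally positive: positive under the four real embeddings
`√p ↦ s√p`, `√q ↦ t√q`, `√r ↦ st√r`, `s, t ∈ {±1}`. -/
def BiqTotallyPositive (p q r : ℕ) (x y z w : ℚ) : Prop :=
  ∀ s t : ℝ, (s = 1 ∨ s = -1) → (t = 1 ∨ t = -1) →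
    0 < (x : ℝ) + s * (y : ℝ) * Real.sqrt (p : ℝ) + t * (z : ℝ) * Real.sqrt (q : ℝ)
      + s * t * (w : ℝ) * Real.sqrt (r : ℝ)

lemma key_pos {A B : ℝ} (hA : 0 < A) (h : A^2 = B^2 + 8) : 0 < A + B := by
  nlinarith [sq_nonneg (A+B), sq_nonneg (A-B)]

/-- Key step: a half-integral totally positive element whose conjugates are bounded by
those of μ has vanishing `√p`-part of its `ℚ(√p)`-conjugate-pair products. -/
lemma vzero (m : ℤ) (sp sq sr : ℝ) (hsp4 : 4 < sp)
    (hqr : sq * sr = (2*(m:ℝ)+3) * sp)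
    (hMM1 : ((2*(m:ℝ)+3) + sp + sq + sr) * ((2*(m:ℝ)+3) + sp - sq - sr) = 8)
    (hMM2 : ((2*(m:ℝ)+3) - sp + sq - sr) * ((2*(m:ℝ)+3) - sp - sq + sr) = 8)
    (x y z w : ℤ)
    (hB1 : 0 < (x:ℝ) + y*sp + z*sq + w*sr)
    (hB2 : 0 < (x:ℝ) + y*sp - z*sq - w*sr)
    (hB3 : 0 < (x:ℝ) - y*sp + z*sq - w*sr)
    (hB4 : 0 < (x:ℝ) - y*sp - z*sq + w*sr)
    (hG1 : (x:ℝ) + y*sp + z*sq + w*sr < (2*(m:ℝ)+3) + sp + sq + sr)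
    (hG2 : (x:ℝ) + y*sp - z*sq - w*sr < (2*(m:ℝ)+3) + sp - sq - sr)
    (hG3 : (x:ℝ) - y*sp + z*sq - w*sr < (2*(m:ℝ)+3) - sp + sq - sr)
    (hG4 : (x:ℝ) - y*sp - z*sq + w*sr < (2*(m:ℝ)+3) - sp - sq + sr) :
    x*y = (2*m+3)*(z*w) := by
  have hsp0 : (0:ℝ) ≤ sp := by linarith
  have e1 : ((x:ℝ) + y*sp + z*sq + w*sr) * ((x:ℝ) + y*sp - z*sq - w*sr)
      = ((x:ℝ)^2 + (y:ℝ)^2*sp^2 - (z:ℝ)^2*sq^2 - (w:ℝ)^2*sr^2)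
        + 2*((x:ℝ)*(y:ℝ) - (2*(m:ℝ)+3)*((z:ℝ)*(w:ℝ)))*sp := by
    linear_combination (-2*(z:ℝ)*(w:ℝ)) * hqr
  have e2 : ((x:ℝ) - y*sp + z*sq - w*sr) * ((x:ℝ) - y*sp - z*sq + w*sr)
      = ((x:ℝ)^2 + (y:ℝ)^2*sp^2 - (z:ℝ)^2*sq^2 - (w:ℝ)^2*sr^2)
        - 2*((x:ℝ)*(y:ℝ) - (2*(m:ℝ)+3)*((z:ℝ)*(w:ℝ)))*sp := by
    linear_combination (2*(z:ℝ)*(w:ℝ)) * hqr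
  have q1 : 0 < ((x:ℝ)^2 + (y:ℝ)^2*sp^2 - (z:ℝ)^2*sq^2 - (w:ℝ)^2*sr^2)
      + 2*((x:ℝ)*(y:ℝ) - (2*(m:ℝ)+3)*((z:ℝ)*(w:ℝ)))*sp := by
    rw [← e1]; exact mul_pos hB1 hB2
  have q2 : 0 < ((x:ℝ)^2 + (y:ℝ)^2*sp^2 - (z:ℝ)^2*sq^2 - (w:ℝ)^2*sr^2)
      - 2*((x:ℝ)*(y:ℝ) - (2*(m:ℝ)+3)*((z:ℝ)*(w:ℝ)))*sp := by
    rw [← e2]; exact mul_pos hB3 hB4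
  have q3 : ((x:ℝ)^2 + (y:ℝ)^2*sp^2 - (z:ℝ)^2*sq^2 - (w:ℝ)^2*sr^2)
      + 2*((x:ℝ)*(y:ℝ) - (2*(m:ℝ)+3)*((z:ℝ)*(w:ℝ)))*sp < 8 := by
    rw [← e1, ← hMM1]; exact mul_lt_mul'' hG1 hG2 hB1.le hB2.le
  have q4 : ((x:ℝ)^2 + (y:ℝ)^2*sp^2 - (z:ℝ)^2*sq^2 - (w:ℝ)^2*sr^2)
      - 2*((x:ℝ)*(y:ℝ) - (2*(m:ℝ)+3)*((z:ℝ)*(w:ℝ)))*sp < 8 := by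
    rw [← e2, ← hMM2]; exact mul_lt_mul'' hG3 hG4 hB3.le hB4.le
  rcases lt_trichotomy (x*y - (2*m+3)*(z*w)) 0 with h | h | h
  · exfalso
    have h1 : ((x:ℝ)*(y:ℝ) - (2*(m:ℝ)+3)*((z:ℝ)*(w:ℝ))) ≤ -1 := by
      have : x*y - (2*m+3)*(z*w) ≤ -1 := by omega
      exact_mod_cast this
    have h2 : ((x:ℝ)*(y:ℝ) - (2*(m:ℝ)+3)*((z:ℝ)*(w:ℝ))) * sp ≤ (-1) * sp :=
      mul_le_mul_of_nonneg_right h1 hsp0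
    linarith
  · linarith [h]
  · exfalso
    have h1 : (1:ℝ) ≤ ((x:ℝ)*(y:ℝ) - (2*(m:ℝ)+3)*((z:ℝ)*(w:ℝ))) := by
      have : 1 ≤ x*y - (2*m+3)*(z*w) := by omega
      exact_mod_cast this
    have h2 : (1:ℝ) * sp ≤ ((x:ℝ)*(y:ℝ) - (2*(m:ℝ)+3)*((z:ℝ)*(w:ℝ))) * sp :=
      mul_le_mul_of_nonneg_right h1 hsp0
    linarith

set_option maxHeartbeats 1600000 in
/-- Let `n ≥ 6` with `p = (2n−1)(2n+1)`, `q = (2n−1)(2n+3)`, `r = (2n+1)(2n+3)` squarefree,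
`K = ℚ(√p, √q)`, `ε_p = 2n+√p`, `ε_q = (2n+1+√q)/2`, `ε_r = (2n+2)+√r`. Then
`μ := (ε_p⁻¹ + 1 − ε_q + ε_q ε_r)/(2n+1) = (n + 3/2) + (1/2)√p + (1/2)√q + (1/2)√r`
is a totally positive algebraic integer of `K` and is indecomposable in `𝓞 K⁺`. -/
theorem stmt_15 (n : ℕ) (hn : 6 ≤ n)
    (p q r : ℕ) (hp : p = (2*n-1)*(2*n+1)) (hq : q = (2*n-1)*(2*n+3))
    (hr : r = (2*n+1)*(2*n+3))
    (hsp : Squarefree p) (hsq : Squarefree q) (hsr : Squarefree r) :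
    -- μ equals the displayed combination of units :
    ((2*(n:ℝ) - Real.sqrt (p:ℝ)) + 1 - (2*(n:ℝ)+1+Real.sqrt (q:ℝ))/2
        + ((2*(n:ℝ)+1+Real.sqrt (q:ℝ))/2) * ((2*(n:ℝ)+2) + Real.sqrt (r:ℝ))) / (2*(n:ℝ)+1)
      = ((n:ℝ) + 3/2) + (1/2) * Real.sqrt (p:ℝ) + (1/2) * Real.sqrt (q:ℝ)
        + (1/2) * Real.sqrt (r:ℝ) ∧
    -- μ is an algebraic integer of K :
    BiqIntegral ((n:ℚ) + 3/2) (1/2) (1/2) (1/2) ∧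
    -- μ is totally positive :
    BiqTotallyPositive p q r ((n:ℚ) + 3/2) (1/2) (1/2) (1/2) ∧
    -- μ is indecomposable in 𝓞 K⁺ :
    ¬∃ x₁ y₁ z₁ w₁ x₂ y₂ z₂ w₂ : ℚ,
      BiqIntegral x₁ y₁ z₁ w₁ ∧ BiqTotallyPositive p q r x₁ y₁ z₁ w₁ ∧
      BiqIntegral x₂ y₂ z₂ w₂ ∧ BiqTotallyPositive p q r x₂ y₂ z₂ w₂ ∧
      x₁ + x₂ = (n:ℚ) + 3/2 ∧ y₁ + y₂ = 1/2 ∧ z₁ + z₂ = 1/2 ∧ w₁ + w₂ = 1/2 := by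
  have hn2 : (1:ℕ) ≤ 2*n := by omega
  set N : ℝ := (n:ℝ) with hN
  have hN6 : (6:ℝ) ≤ N := by rw [hN]; exact_mod_cast hn
  set sp := Real.sqrt (p:ℝ) with hsp'
  set sq := Real.sqrt (q:ℝ) with hsq'
  set sr := Real.sqrt (r:ℝ) with hsr'
  have hpR : (p:ℝ) = (2*N-1)*(2*N+1) := by
    rw [hp]; push_cast [Nat.cast_sub hn2]; ring
  have hqR : (q:ℝ) = (2*N-1)*(2*N+3) := by
    rw [hq]; push_cast [Nat.cast_sub hn2]; ring
  have hrR : (r:ℝ) = (2*N+1)*(2*N+3) := by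
    rw [hr]; push_cast; ring
  have hsp0 : (0:ℝ) ≤ sp := Real.sqrt_nonneg _
  have hsq0 : (0:ℝ) ≤ sq := Real.sqrt_nonneg _
  have hsr0 : (0:ℝ) ≤ sr := Real.sqrt_nonneg _
  have hp2 : sp^2 = 4*N^2 - 1 := by
    rw [hsp', Real.sq_sqrt (Nat.cast_nonneg p), hpR]; ring
  have hq2 : sq^2 = 4*N^2 + 4*N - 3 := by
    rw [hsq', Real.sq_sqrt (Nat.cast_nonneg q), hqR]; ring
  have hr2 : sr^2 = 4*N^2 + 8*N + 3 := by
    rw [hsr', Real.sq_sqrt (Nat.cast_nonneg r), hrR]; ring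
  have hqr : sq * sr = (2*N+3) * sp := by
    rw [hsq', hsr', hsp', ← Real.sqrt_mul (Nat.cast_nonneg q),
      show ((q:ℝ)*(r:ℝ)) = (2*N+3)^2 * (p:ℝ) by rw [hqR, hrR, hpR]; ring,
      Real.sqrt_mul (by positivity), Real.sqrt_sq (by positivity)]
  have hsplt : sp < 2*N := by nlinarith
  have hspgt : 4 < sp := by nlinarith
  have hMM1 : ((2*N+3) + sp + sq + sr) * ((2*N+3) + sp - sq - sr) = 8 := by
    linear_combination hp2 - hq2 - hr2 - 2*hqr
  have hMM2 : ((2*N+3) - sp + sq - sr) * ((2*N+3) - sp - sq + sr) = 8 := by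
    linear_combination hp2 - hq2 - hr2 + 2*hqr
  have kp2 : 0 < (2*N+3+sp) + (-sq - sr) :=
    key_pos (by linarith) (by linear_combination hp2 - hq2 - hr2 - 2*hqr)
  have kp3 : 0 < (2*N+3-sp) + (sq - sr) :=
    key_pos (by linarith) (by linear_combination hp2 - hq2 - hr2 + 2*hqr)
  have kp4 : 0 < (2*N+3-sp) + (sr - sq) :=
    key_pos (by linarith) (by linear_combination hp2 - hq2 - hr2 + 2*hqr)
  refine ⟨?_, ?_, ?_, ?_⟩
  · rw [div_eq_iff (by nlinarith : 2*N+1 ≠ 0)]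
    linear_combination (1/2) * hqr
  · exact ⟨n+1, 0, 1, 1, by push_cast; ring, by norm_num, by norm_num, by norm_num⟩
  · intro s t hs ht
    have hc : (((n:ℚ)+3/2 : ℚ):ℝ) = N + 3/2 := by push_cast; ring
    have hh : (((1:ℚ)/2 : ℚ):ℝ) = 1/2 := by norm_num
    rcases hs with rfl | rfl <;> rcases ht with rfl | rfl <;>
      rw [hc] <;> norm_num <;> linarith
  · rintro ⟨x₁, y₁, z₁, w₁, x₂, y₂, z₂, w₂, hI1, hT1, hI2, hT2, hsx, hsy, hsz, hsw⟩
    obtain ⟨a₁, b₁, c₁, d₁, hx1, hy1, hz1, hw1⟩ := hI1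
    obtain ⟨a₂, b₂, c₂, d₂, hx2, hy2, hz2, hw2⟩ := hI2
    set m : ℤ := (n:ℤ) with hm
    have hm6 : (6:ℤ) ≤ m := by rw [hm]; exact_mod_cast hn
    have hmN : ((m:ℤ):ℝ) = N := by rw [hm, hN]; push_cast; ring
    obtain ⟨X1, rx1⟩ : ∃ X : ℤ, ((x₁:ℚ):ℝ) = (X:ℝ)/2 :=
      ⟨2*a₁+c₁, by rw [hx1]; push_cast; ring⟩
    obtain ⟨Y1, ry1⟩ : ∃ X : ℤ, ((y₁:ℚ):ℝ) = (X:ℝ)/2 :=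
      ⟨2*b₁+d₁, by rw [hy1]; push_cast; ring⟩
    obtain ⟨Z1, rz1⟩ : ∃ X : ℤ, ((z₁:ℚ):ℝ) = (X:ℝ)/2 :=
      ⟨c₁, by rw [hz1]; push_cast; ring⟩
    obtain ⟨W1, rw1⟩ : ∃ X : ℤ, ((w₁:ℚ):ℝ) = (X:ℝ)/2 :=
      ⟨d₁, by rw [hw1]; push_cast; ring⟩
    obtain ⟨X2, rx2⟩ : ∃ X : ℤ, ((x₂:ℚ):ℝ) = (X:ℝ)/2 :=
      ⟨2*a₂+c₂, by rw [hx2]; push_cast; ring⟩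
    obtain ⟨Y2, ry2⟩ : ∃ X : ℤ, ((y₂:ℚ):ℝ) = (X:ℝ)/2 :=
      ⟨2*b₂+d₂, by rw [hy2]; push_cast; ring⟩
    obtain ⟨Z2, rz2⟩ : ∃ X : ℤ, ((z₂:ℚ):ℝ) = (X:ℝ)/2 :=
      ⟨c₂, by rw [hz2]; push_cast; ring⟩
    obtain ⟨W2, rw2⟩ : ∃ X : ℤ, ((w₂:ℚ):ℝ) = (X:ℝ)/2 :=
      ⟨d₂, by rw [hw2]; push_cast; ring⟩
    -- real sum relations
    have hsxR : ((x₁:ℚ):ℝ) + ((x₂:ℚ):ℝ) = N + 3/2 := by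
      rw [hN, ← Rat.cast_add, hsx]; push_cast; ring
    have hsyR : ((y₁:ℚ):ℝ) + ((y₂:ℚ):ℝ) = 1/2 := by
      rw [← Rat.cast_add, hsy]; norm_num
    have hszR : ((z₁:ℚ):ℝ) + ((z₂:ℚ):ℝ) = 1/2 := by
      rw [← Rat.cast_add, hsz]; norm_num
    have hswR : ((w₁:ℚ):ℝ) + ((w₂:ℚ):ℝ) = 1/2 := by
      rw [← Rat.cast_add, hsw]; norm_num
    have rSX : (X1:ℝ) + (X2:ℝ) = 2*N + 3 := by
      linear_combination 2*hsxR - 2*rx1 - 2*rx2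
    have rSY : (Y1:ℝ) + (Y2:ℝ) = 1 := by linear_combination 2*hsyR - 2*ry1 - 2*ry2
    have rSZ : (Z1:ℝ) + (Z2:ℝ) = 1 := by linear_combination 2*hszR - 2*rz1 - 2*rz2
    have rSW : (W1:ℝ) + (W2:ℝ) = 1 := by linear_combination 2*hswR - 2*rw1 - 2*rw2
    have SX : X1 + X2 = 2*m+3 := by
      have hh : ((X1 + X2 : ℤ):ℝ) = ((2*m+3 : ℤ):ℝ) := by push_cast; rw [hmN]; linear_combination rSX
      exact_mod_cast hh
    have SY : Y1 + Y2 = 1 := by exact_mod_cast rSY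
    have SZ : Z1 + Z2 = 1 := by exact_mod_cast rSZ
    have SW : W1 + W2 = 1 := by exact_mod_cast rSW
    -- positivity of the conjugates of β and γ (doubled)
    have hB1 : 0 < (X1:ℝ) + Y1*sp + Z1*sq + W1*sr := by
      have h := hT1 1 1 (Or.inl rfl) (Or.inl rfl)
      rw [rx1, ry1, rz1, rw1] at h; linarith only [h]
    have hB2 : 0 < (X1:ℝ) + Y1*sp - Z1*sq - W1*sr := by
      have h := hT1 1 (-1) (Or.inl rfl) (Or.inr rfl)
      rw [rx1, ry1, rz1, rw1] at h; linarith only [h]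
    have hB3 : 0 < (X1:ℝ) - Y1*sp + Z1*sq - W1*sr := by
      have h := hT1 (-1) 1 (Or.inr rfl) (Or.inl rfl)
      rw [rx1, ry1, rz1, rw1] at h; linarith only [h]
    have hB4 : 0 < (X1:ℝ) - Y1*sp - Z1*sq + W1*sr := by
      have h := hT1 (-1) (-1) (Or.inr rfl) (Or.inr rfl)
      rw [rx1, ry1, rz1, rw1] at h; linarith only [h]
    have hC1 : 0 < (X2:ℝ) + Y2*sp + Z2*sq + W2*sr := by
      have h := hT2 1 1 (Or.inl rfl) (Or.inl rfl)
      rw [rx2, ry2, rz2, rw2] at h; linarith only [h]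
    have hC2 : 0 < (X2:ℝ) + Y2*sp - Z2*sq - W2*sr := by
      have h := hT2 1 (-1) (Or.inl rfl) (Or.inr rfl)
      rw [rx2, ry2, rz2, rw2] at h; linarith only [h]
    have hC3 : 0 < (X2:ℝ) - Y2*sp + Z2*sq - W2*sr := by
      have h := hT2 (-1) 1 (Or.inr rfl) (Or.inl rfl)
      rw [rx2, ry2, rz2, rw2] at h; linarith only [h]
    have hC4 : 0 < (X2:ℝ) - Y2*sp - Z2*sq + W2*sr := by
      have h := hT2 (-1) (-1) (Or.inr rfl) (Or.inr rfl)
      rw [rx2, ry2, rz2, rw2] at h; linarith only [h]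
    -- multiplied sum relations (to make linarith work with nonlinear atoms)
    have mulY : (Y1:ℝ)*sp + (Y2:ℝ)*sp = sp := by linear_combination sp * rSY
    have mulZ : (Z1:ℝ)*sq + (Z2:ℝ)*sq = sq := by linear_combination sq * rSZ
    have mulW : (W1:ℝ)*sr + (W2:ℝ)*sr = sr := by linear_combination sr * rSW
    -- bounds: conjugates of each part are below those of μ
    have hG1 : (X1:ℝ) + Y1*sp + Z1*sq + W1*sr < (2*N+3) + sp + sq + sr := by linarith only [hC1, rSX, mulY, mulZ, mulW]
    have hG2 : (X1:ℝ) + Y1*sp - Z1*sq - W1*sr < (2*N+3) + sp - sq - sr := by linarith only [hC2, rSX, mulY, mulZ, mulW]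
    have hG3 : (X1:ℝ) - Y1*sp + Z1*sq - W1*sr < (2*N+3) - sp + sq - sr := by linarith only [hC3, rSX, mulY, mulZ, mulW]
    have hG4 : (X1:ℝ) - Y1*sp - Z1*sq + W1*sr < (2*N+3) - sp - sq + sr := by linarith only [hC4, rSX, mulY, mulZ, mulW]
    have hH1 : (X2:ℝ) + Y2*sp + Z2*sq + W2*sr < (2*N+3) + sp + sq + sr := by linarith only [hB1, rSX, mulY, mulZ, mulW]
    have hH2 : (X2:ℝ) + Y2*sp - Z2*sq - W2*sr < (2*N+3) + sp - sq - sr := by linarith only [hB2, rSX, mulY, mulZ, mulW]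
    have hH3 : (X2:ℝ) - Y2*sp + Z2*sq - W2*sr < (2*N+3) - sp + sq - sr := by linarith only [hB3, rSX, mulY, mulZ, mulW]
    have hH4 : (X2:ℝ) - Y2*sp - Z2*sq + W2*sr < (2*N+3) - sp - sq + sr := by linarith only [hB4, rSX, mulY, mulZ, mulW]
    have hqr' : sq * sr = (2*(m:ℝ)+3) * sp := by rw [hmN]; exact hqr
    have hMM1' : ((2*(m:ℝ)+3) + sp + sq + sr) * ((2*(m:ℝ)+3) + sp - sq - sr) = 8 := by
      rw [hmN]; exact hMM1
    have hMM2' : ((2*(m:ℝ)+3) - sp + sq - sr) * ((2*(m:ℝ)+3) - sp - sq + sr) = 8 := by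
      rw [hmN]; exact hMM2
    have Vβ : X1*Y1 = (2*m+3)*(Z1*W1) :=
      vzero m sp sq sr hspgt hqr' hMM1' hMM2' X1 Y1 Z1 W1 hB1 hB2 hB3 hB4
        (by rw [hmN]; exact hG1) (by rw [hmN]; exact hG2)
        (by rw [hmN]; exact hG3) (by rw [hmN]; exact hG4)
    have Vγ : X2*Y2 = (2*m+3)*(Z2*W2) :=
      vzero m sp sq sr hspgt hqr' hMM1' hMM2' X2 Y2 Z2 W2 hC1 hC2 hC3 hC4
        (by rw [hmN]; exact hH1) (by rw [hmN]; exact hH2)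
        (by rw [hmN]; exact hH3) (by rw [hmN]; exact hH4)
    -- endgame in ℤ
    have hX1pos : 0 < X1 := by
      have h : (0:ℝ) < X1 := by linarith only [hB1, hB2, hB3, hB4]
      exact_mod_cast h
    have hX2pos : 0 < X2 := by
      have h : (0:ℝ) < X2 := by linarith only [hC1, hC2, hC3, hC4]
      exact_mod_cast h
    have hXlt : X1 < 2*m+3 := by omega
    have eX2 : X2 = 2*m+3 - X1 := by omega
    have eY2 : Y2 = 1 - Y1 := by omega
    have eZ2 : Z2 = 1 - Z1 := by omega
    have eW2 : W2 = 1 - W1 := by omega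
    rw [eX2, eY2, eZ2, eW2] at Vγ
    have hfin : X1 = (2*m+3)*(Z1 + W1 - Y1) := by linear_combination Vβ - Vγ
    have h0 : (0:ℤ) ≤ 2*m+3 := by omega
    rcases le_or_gt (Z1 + W1 - Y1) 0 with h | h
    · have hle : (2*m+3)*(Z1 + W1 - Y1) ≤ (2*m+3)*0 := mul_le_mul_of_nonneg_left h h0
      rw [← hfin, mul_zero] at hle
      omega
    · have h1 : (1:ℤ) ≤ Z1 + W1 - Y1 := h
      have hle : (2*m+3)*1 ≤ (2*m+3)*(Z1 + W1 - Y1) := mul_le_mul_of_nonneg_left h1 h0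
      rw [← hfin, mul_one] at hle
      omega
end

section
/- Let n ≥ 6 with p = (2n−1)(2n+1), r = (2n+1)(2n+3) squarefree, q = (2n−1)(2n+3), K = ℚ(√p, √q). Set ε_p = 2n+√p and ε_r = (2n+2)+√r. Then (ε_p^{-1} + ε_r)/2 = (2n+1) − (1/2)√p + (1/2)√r is a totally positive algebraic integer of K and is indecomposable in O_K^+. -/
lemma biq_aux (m : ℕ) (p q r : ℕ)
    (hp : (p:ℝ) = (2*(m:ℝ)+11)*(2*(m:ℝ)+13))
    (hq : (q:ℝ) = (2*(m:ℝ)+11)*(2*(m:ℝ)+15))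
    (hr : (r:ℝ) = (2*(m:ℝ)+13)*(2*(m:ℝ)+15))
    (x y z w : ℚ) (a b c d : ℤ)
    (hx : x = a + c/2) (hy : y = b + d/2) (hz : z = c/2) (hw : w = d/2)
    (htp : BiqTotallyPositive p q r x y z w) :
    0 < a + (2*(m:ℤ)+11)*b - ((m:ℤ)+5)*c - d := by
  set A := Real.sqrt (2*(m:ℝ)+11) with hAdef
  set B := Real.sqrt (2*(m:ℝ)+13) with hBdef
  set C := Real.sqrt (2*(m:ℝ)+15) with hCdef
  have hAnn : (0:ℝ) ≤ 2*(m:ℝ)+11 := by positivity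
  have hBnn : (0:ℝ) ≤ 2*(m:ℝ)+13 := by positivity
  have hCnn : (0:ℝ) ≤ 2*(m:ℝ)+15 := by positivity
  have hA2 : A^2 = 2*(m:ℝ)+11 := Real.sq_sqrt hAnn
  have hB2 : B^2 = 2*(m:ℝ)+13 := Real.sq_sqrt hBnn
  have hApos : 0 < A := Real.sqrt_pos.mpr (by positivity)
  have hBpos : 0 < B := Real.sqrt_pos.mpr (by positivity)
  have hCpos : 0 < C := Real.sqrt_pos.mpr (by positivity)
  have hAB : A < B := Real.sqrt_lt_sqrt hAnn (by linarith)
  have hBC : B < C := Real.sqrt_lt_sqrt hBnn (by linarith)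
  have hsp : Real.sqrt (p:ℝ) = A * B := by
    rw [hp, hAdef, hBdef, ← Real.sqrt_mul hAnn]
  have hsq : Real.sqrt (q:ℝ) = A * C := by
    rw [hq, hAdef, hCdef, ← Real.sqrt_mul hAnn]
  have hsr : Real.sqrt (r:ℝ) = B * C := by
    rw [hr, hBdef, hCdef, ← Real.sqrt_mul hBnn]
  have hf1 := htp 1 1 (Or.inl rfl) (Or.inl rfl)
  have hf2 := htp 1 (-1) (Or.inl rfl) (Or.inr rfl)
  have hf3 := htp (-1) 1 (Or.inr rfl) (Or.inl rfl)
  have hf4 := htp (-1) (-1) (Or.inr rfl) (Or.inr rfl)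
  rw [hsp, hsq, hsr] at hf1 hf2 hf3 hf4
  have hD1 : (0:ℝ) < A^2*B*C*(B+A)*(C-B) :=
    mul_pos (mul_pos (mul_pos (mul_pos (by positivity) hBpos) hCpos)
      (by linarith)) (by linarith)
  have hD2 : (0:ℝ) < A^2*B*C*(B+A)*(C+B) :=
    mul_pos (mul_pos (mul_pos (mul_pos (by positivity) hBpos) hCpos)
      (by linarith)) (by linarith)
  have hD3 : (0:ℝ) < A^2*B*C*(B-A)*(C+B) :=
    mul_pos (mul_pos (mul_pos (mul_pos (by positivity) hBpos) hCpos)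
      (by linarith)) (by linarith)
  have hD4 : (0:ℝ) < A^2*B*C*(B-A)*(C-B) :=
    mul_pos (mul_pos (mul_pos (mul_pos (by positivity) hBpos) hCpos)
      (by linarith)) (by linarith)
  have hkey : (0:ℝ) < (4*A^2*B^2*C^2) *
      ((x:ℝ) + A^2*(y:ℝ) - A^2*(z:ℝ) - B^2*(w:ℝ)) := by
    have e : (4*A^2*B^2*C^2) * ((x:ℝ) + A^2*(y:ℝ) - A^2*(z:ℝ) - B^2*(w:ℝ)) =
        (A^2*B*C*(B+A)*(C-B)) *
          ((x:ℝ) + 1 * (y:ℝ) * (A*B) + 1 * (z:ℝ) * (A*C) + 1 * 1 * (w:ℝ) * (B*C)) +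
        (A^2*B*C*(B+A)*(C+B)) *
          ((x:ℝ) + 1 * (y:ℝ) * (A*B) + (-1) * (z:ℝ) * (A*C) + 1 * (-1) * (w:ℝ) * (B*C)) +
        (A^2*B*C*(B-A)*(C+B)) *
          ((x:ℝ) + (-1) * (y:ℝ) * (A*B) + 1 * (z:ℝ) * (A*C) + (-1) * 1 * (w:ℝ) * (B*C)) +
        (A^2*B*C*(B-A)*(C-B)) *
          ((x:ℝ) + (-1) * (y:ℝ) * (A*B) + (-1) * (z:ℝ) * (A*C) + (-1) * (-1) * (w:ℝ) * (B*C)) := by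
      ring
    rw [e]
    have := mul_pos hD1 hf1
    have := mul_pos hD2 hf2
    have := mul_pos hD3 hf3
    have := mul_pos hD4 hf4
    linarith
  have hscal : (0:ℝ) < 4*A^2*B^2*C^2 := by positivity
  have hE : (0:ℝ) < (x:ℝ) + A^2*(y:ℝ) - A^2*(z:ℝ) - B^2*(w:ℝ) := by
    by_contra h
    push_neg at h
    exact absurd hkey (not_lt.mpr (mul_nonpos_of_nonneg_of_nonpos hscal.le h))
  rw [hA2, hB2] at hE
  have hEQ : (0:ℚ) < x + (2*(m:ℚ)+11)*y - (2*(m:ℚ)+11)*z - (2*(m:ℚ)+13)*w := by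
    have : (0:ℝ) < ((x + (2*(m:ℚ)+11)*y - (2*(m:ℚ)+11)*z - (2*(m:ℚ)+13)*w : ℚ) : ℝ) := by
      push_cast
      linarith
    exact_mod_cast this
  rw [hx, hy, hz, hw] at hEQ
  have : (0:ℚ) < ((a + (2*(m:ℤ)+11)*b - ((m:ℤ)+5)*c - d : ℤ) : ℚ) := by
    push_cast
    push_cast at hEQ
    linarith
  exact_mod_cast this
/-- Let `n ≥ 6` with `p = (2n−1)(2n+1)`, `r = (2n+1)(2n+3)` squarefree,
`q = (2n−1)(2n+3)`, `K = ℚ(√p,√q)`, `ε_p = 2n+√p`, `ε_r = (2n+2)+√r`. Then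
`(ε_p⁻¹ + ε_r)/2 = (2n+1) − (1/2)√p + (1/2)√r` is a totally positive algebraic integer
of `K` and is indecomposable in `𝓞 K⁺`. -/
theorem stmt_16 (n : ℕ) (hn : 6 ≤ n)
    (p q r : ℕ) (hp : p = (2*n-1)*(2*n+1)) (hq : q = (2*n-1)*(2*n+3))
    (hr : r = (2*n+1)*(2*n+3))
    (hsp : Squarefree p) (hsq : Squarefree q) (hsr : Squarefree r) :
    -- the element equals (ε_p⁻¹ + ε_r)/2 :
    ((2*(n:ℝ) - Real.sqrt (p:ℝ)) + ((2*(n:ℝ)+2) + Real.sqrt (r:ℝ))) / 2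
      = (2*(n:ℝ)+1) - (1/2) * Real.sqrt (p:ℝ) + (1/2) * Real.sqrt (r:ℝ) ∧
    -- it is an algebraic integer of K :
    BiqIntegral (2*(n:ℚ)+1) (-(1/2)) 0 (1/2) ∧
    -- it is totally positive :
    BiqTotallyPositive p q r (2*(n:ℚ)+1) (-(1/2)) 0 (1/2) ∧
    -- it is indecomposable in 𝓞 K⁺ :
    ¬∃ x₁ y₁ z₁ w₁ x₂ y₂ z₂ w₂ : ℚ,
      BiqIntegral x₁ y₁ z₁ w₁ ∧ BiqTotallyPositive p q r x₁ y₁ z₁ w₁ ∧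
      BiqIntegral x₂ y₂ z₂ w₂ ∧ BiqTotallyPositive p q r x₂ y₂ z₂ w₂ ∧
      x₁ + x₂ = 2*(n:ℚ)+1 ∧ y₁ + y₂ = -(1/2) ∧ z₁ + z₂ = 0 ∧ w₁ + w₂ = 1/2 := by
  obtain ⟨m, rfl⟩ : ∃ m, n = m + 6 := ⟨n - 6, by omega⟩
  have hpN : p = (2*m+11)*(2*m+13) := by
    rw [hp]; congr 1 <;> omega
  have hqN : q = (2*m+11)*(2*m+15) := by
    rw [hq]; congr 1 <;> omega
  have hrN : r = (2*m+13)*(2*m+15) := by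
    rw [hr]; congr 1 <;> omega
  have hpR : (p:ℝ) = (2*(m:ℝ)+11)*(2*(m:ℝ)+13) := by rw [hpN]; push_cast; ring
  have hqR : (q:ℝ) = (2*(m:ℝ)+11)*(2*(m:ℝ)+15) := by rw [hqN]; push_cast; ring
  have hrR : (r:ℝ) = (2*(m:ℝ)+13)*(2*(m:ℝ)+15) := by rw [hrN]; push_cast; ring
  have hsqrtp : Real.sqrt (p:ℝ) < 2*((m:ℝ)+6) := by
    rw [show Real.sqrt (p:ℝ) < 2*((m:ℝ)+6) ↔ (p:ℝ) < (2*((m:ℝ)+6))^2 from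
      Real.sqrt_lt' (by positivity)]
    rw [hpR]; nlinarith [Nat.cast_nonneg (α := ℝ) m]
  have hsqrtr : Real.sqrt (r:ℝ) < 2*((m:ℝ)+6)+2 := by
    rw [show Real.sqrt (r:ℝ) < 2*((m:ℝ)+6)+2 ↔ (r:ℝ) < (2*((m:ℝ)+6)+2)^2 from
      Real.sqrt_lt' (by positivity)]
    rw [hrR]; nlinarith [Nat.cast_nonneg (α := ℝ) m]
  have hsqrtp0 : 0 ≤ Real.sqrt (p:ℝ) := Real.sqrt_nonneg _
  have hsqrtr0 : 0 ≤ Real.sqrt (r:ℝ) := Real.sqrt_nonneg _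
  refine ⟨by ring, ⟨2*(m:ℤ)+13, -1, 0, 1, by push_cast; ring, by norm_num,
    by norm_num, by norm_num⟩, ?_, ?_⟩
  · intro s t hs ht
    rcases hs with rfl | rfl <;> rcases ht with rfl | rfl <;>
      · push_cast
        push_cast at hsqrtp hsqrtr
        nlinarith [Real.sqrt_nonneg (q:ℝ)]
  · rintro ⟨x₁, y₁, z₁, w₁, x₂, y₂, z₂, w₂,
      ⟨a₁, b₁, c₁, d₁, hx₁, hy₁, hz₁, hw₁⟩, htp₁,
      ⟨a₂, b₂, c₂, d₂, hx₂, hy₂, hz₂, hw₂⟩, htp₂, hsx, hsy, hsz, hsw⟩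
    have hL₁ := biq_aux m p q r hpR hqR hrR x₁ y₁ z₁ w₁ a₁ b₁ c₁ d₁ hx₁ hy₁ hz₁ hw₁ htp₁
    have hL₂ := biq_aux m p q r hpR hqR hrR x₂ y₂ z₂ w₂ a₂ b₂ c₂ d₂ hx₂ hy₂ hz₂ hw₂ htp₂
    -- derive the coordinate sums over ℤ
    have hc : c₁ + c₂ = 0 := by
      have : ((c₁ + c₂ : ℤ) : ℚ) = 0 := by
        push_cast
        rw [hz₁, hz₂] at hsz
        linarith
      exact_mod_cast this
    have hd : d₁ + d₂ = 1 := by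
      have : ((d₁ + d₂ : ℤ) : ℚ) = 1 := by
        push_cast
        rw [hw₁, hw₂] at hsw
        linarith
      exact_mod_cast this
    have hb : b₁ + b₂ = -1 := by
      have : ((b₁ + b₂ : ℤ) : ℚ) = -1 := by
        have hdq : ((d₁:ℚ) + d₂) = 1 := by exact_mod_cast hd
        push_cast
        rw [hy₁, hy₂] at hsy
        linarith
      exact_mod_cast this
    have ha : a₁ + a₂ = 2*(m:ℤ)+13 := by
      have : ((a₁ + a₂ : ℤ) : ℚ) = 2*(m:ℚ)+13 := by
        have hcq : ((c₁:ℚ) + c₂) = 0 := by exact_mod_cast hc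
        push_cast
        rw [hx₁, hx₂] at hsx
        push_cast at hsx
        linarith
      exact_mod_cast this
    have hsum : (a₁ + (2*(m:ℤ)+11)*b₁ - ((m:ℤ)+5)*c₁ - d₁)
        + (a₂ + (2*(m:ℤ)+11)*b₂ - ((m:ℤ)+5)*c₂ - d₂) = 1 := by
      linear_combination ha + (2*(m:ℤ)+11)*hb - ((m:ℤ)+5)*hc - hd
    linarith
end

section
/- For n ≥ 6 with p = (2n−1)(2n+1) squarefree and p ≡ 3 (mod 4), the real quadratic field ℚ(√p) has exactly one indecomposable element of O^+ up to multiplication by totally positive units, namely 1. -/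
/-- `x + y√p` is a totally positive element of `ℤ[√p]`. -/
def QuadTotPos (S : ℝ) (x y : ℤ) : Prop :=
  0 < (x : ℝ) + (y : ℝ) * S ∧ 0 < (x : ℝ) - (y : ℝ) * S

/-- `x + y√p` is an indecomposable element of `ℤ[√p]⁺`: totally positive and not a sum of
two totally positive elements of `ℤ[√p]`. -/
def QuadIndec (S : ℝ) (x y : ℤ) : Prop :=
  QuadTotPos S x y ∧
    ¬∃ a b c d : ℤ, QuadTotPos S a b ∧ QuadTotPos S c d ∧ x = a + c ∧ y = b + d

lemma quad_totpos_x_pos {S : ℝ} {x y : ℤ} (h : QuadTotPos S x y) : 0 < x := by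
  have h1 := h.1
  have h2 := h.2
  have : (0 : ℝ) < (x : ℝ) := by linarith
  exact_mod_cast this

/-- Key induction: every indecomposable with nonneg second coordinate has norm 1. -/
lemma quad_key (S : ℝ) (N : ℤ) (hN : 2 ≤ N) (hSpos : 0 < S)
    (hS2 : S ^ 2 = ((4 * N ^ 2 - 1 : ℤ) : ℝ)) (hirr : Irrational S) :
    ∀ k : ℕ, ∀ x : ℤ, QuadIndec S x (k : ℤ) →
      x ^ 2 - (4 * N ^ 2 - 1) * (k : ℤ) ^ 2 = 1 := by
  have hNR : (2 : ℝ) ≤ (N : ℝ) := by exact_mod_cast hN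
  have hS2R : S ^ 2 = 4 * (N : ℝ) ^ 2 - 1 := by rw [hS2]; push_cast; ring
  have hSub : S < 2 * (N : ℝ) := by nlinarith
  have hSlb : 2 * (N : ℝ) - 1 < S := by nlinarith
  intro k
  induction k using Nat.strong_induction_on with
  | _ k IH =>
    intro x hind
    obtain ⟨⟨h1, h2⟩, hnd⟩ := hind
    rcases Nat.eq_zero_or_pos k with hk0 | hkpos
    · -- base case k = 0
      subst hk0
      simp only [Nat.cast_zero, Int.cast_zero, zero_mul, add_zero, sub_zero] at h1 h2
      have hx1 : 1 ≤ x := by exact_mod_cast h1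
      rcases eq_or_lt_of_le hx1 with h | h
      · rw [← h]; ring
      · exfalso
        apply hnd
        have hxR : (1 : ℝ) < (x : ℝ) := by exact_mod_cast h
        refine ⟨1, 0, x - 1, 0, ⟨by norm_num, by norm_num⟩, ⟨?_, ?_⟩, by ring, by ring⟩ <;>
          · push_cast
            linarith
    · -- inductive case k ≥ 1
      have hkR : (1 : ℝ) ≤ (k : ℝ) := by exact_mod_cast hkpos
      have hkS : 0 < (k : ℝ) * S := by positivity
      -- Step 1 : x - k S < 1
      have hlt1 : (x : ℝ) - (k : ℝ) * S < 1 := by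
        by_contra hcon
        push_neg at hcon
        have hne : (x : ℝ) - (k : ℝ) * S ≠ 1 := by
          intro heq
          apply hirr
          refine ⟨((x : ℚ) - 1) / (k : ℚ), ?_⟩
          have hk0 : ((k : ℚ) : ℝ) ≠ 0 := by
            push_cast
            positivity
          push_cast
          field_simp
          linarith
        have hgt1 : 1 < (x : ℝ) - (k : ℝ) * S := lt_of_le_of_ne hcon (Ne.symm hne)
        apply hnd
        refine ⟨1, 0, x - 1, (k : ℤ), ⟨?_, ?_⟩, ⟨?_, ?_⟩, by ring, by ring⟩ <;> push_cast
        · linarith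
        · linarith
        · linarith
        · linarith
      -- the descent element β = (x + kS)(2N - S) = x1 + y1 S
      set x1 : ℤ := 2 * N * x - (4 * N ^ 2 - 1) * (k : ℤ) with hx1def
      set y1 : ℤ := 2 * N * (k : ℤ) - x with hy1def
      have hv1 : (x1 : ℝ) + (y1 : ℝ) * S = ((x : ℝ) + (k : ℝ) * S) * (2 * N - S) := by
        push_cast [hx1def, hy1def]
        linear_combination (k : ℝ) * hS2R
      have hv2 : (x1 : ℝ) - (y1 : ℝ) * S = ((x : ℝ) - (k : ℝ) * S) * (2 * N + S) := by
        push_cast [hx1def, hy1def]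
        linear_combination (k : ℝ) * hS2R
      have h2NS : (0 : ℝ) < 2 * N - S := by linarith
      have h2NS' : (0 : ℝ) < 2 * N + S := by linarith
      have hβ1 : (0 : ℝ) < (x1 : ℝ) + (y1 : ℝ) * S := by rw [hv1]; exact mul_pos h1 h2NS
      have hβ2 : (0 : ℝ) < (x1 : ℝ) - (y1 : ℝ) * S := by rw [hv2]; exact mul_pos h2 h2NS'
      -- bounds on y1
      have hy1R : (y1 : ℝ) = 2 * N * k - x := by push_cast [hy1def]; ring
      have hy1nonneg : 0 ≤ y1 := by
        have : (-1 : ℝ) < (y1 : ℝ) := by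
          rw [hy1R]
          nlinarith
        have : (-1 : ℤ) < y1 := by exact_mod_cast this
        omega
      have hy1lt : y1 < (k : ℤ) := by
        have : (y1 : ℝ) < (k : ℝ) := by
          rw [hy1R]
          nlinarith
        exact_mod_cast this
      -- β is indecomposable
      have hxrec : x = 2 * N * x1 + (4 * N ^ 2 - 1) * y1 := by rw [hx1def, hy1def]; ring
      have hyrec : (k : ℤ) = x1 + 2 * N * y1 := by rw [hx1def, hy1def]; ring
      have hβind : QuadIndec S x1 y1 := by
        refine ⟨⟨hβ1, hβ2⟩, ?_⟩
        rintro ⟨a, b, c, d, ⟨ha1, ha2⟩, ⟨hc1, hc2⟩, hxe, hye⟩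
        apply hnd
        refine ⟨2 * N * a + (4 * N ^ 2 - 1) * b, a + 2 * N * b,
                2 * N * c + (4 * N ^ 2 - 1) * d, c + 2 * N * d, ⟨?_, ?_⟩, ⟨?_, ?_⟩, ?_, ?_⟩
        · have : ((2 * N * a + (4 * N ^ 2 - 1) * b : ℤ) : ℝ) + ((a + 2 * N * b : ℤ) : ℝ) * S
              = ((a : ℝ) + (b : ℝ) * S) * (2 * N + S) := by
            push_cast; linear_combination (-(b : ℝ)) * hS2R
          rw [this]; exact mul_pos ha1 h2NS'
        · have : ((2 * N * a + (4 * N ^ 2 - 1) * b : ℤ) : ℝ) - ((a + 2 * N * b : ℤ) : ℝ) * S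
              = ((a : ℝ) - (b : ℝ) * S) * (2 * N - S) := by
            push_cast; linear_combination (-(b : ℝ)) * hS2R
          rw [this]; exact mul_pos ha2 h2NS
        · have : ((2 * N * c + (4 * N ^ 2 - 1) * d : ℤ) : ℝ) + ((c + 2 * N * d : ℤ) : ℝ) * S
              = ((c : ℝ) + (d : ℝ) * S) * (2 * N + S) := by
            push_cast; linear_combination (-(d : ℝ)) * hS2R
          rw [this]; exact mul_pos hc1 h2NS'
        · have : ((2 * N * c + (4 * N ^ 2 - 1) * d : ℤ) : ℝ) - ((c + 2 * N * d : ℤ) : ℝ) * S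
              = ((c : ℝ) - (d : ℝ) * S) * (2 * N - S) := by
            push_cast; linear_combination (-(d : ℝ)) * hS2R
          rw [this]; exact mul_pos hc2 h2NS
        · rw [hxrec, hxe, hye]; ring
        · rw [hyrec, hxe, hye]; ring
      -- apply IH
      have htn : (y1.toNat : ℤ) = y1 := Int.toNat_of_nonneg hy1nonneg
      have hlt' : y1.toNat < k := by omega
      have hIH := IH y1.toNat hlt' x1 (by rwa [htn])
      rw [htn] at hIH
      -- conclude
      rw [hxrec, hyrec]
      linear_combination hIH

lemma quad_indec_neg {S : ℝ} {x y : ℤ} (h : QuadIndec S x y) : QuadIndec S x (-y) := by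
  obtain ⟨⟨h1, h2⟩, hnd⟩ := h
  refine ⟨⟨by push_cast; linarith, by push_cast; linarith⟩, ?_⟩
  rintro ⟨a, b, c, d, ⟨ha1, ha2⟩, ⟨hc1, hc2⟩, hxe, hye⟩
  apply hnd
  refine ⟨a, -b, c, -d, ⟨by push_cast; linarith, by push_cast; linarith⟩,
    ⟨by push_cast; linarith, by push_cast; linarith⟩, hxe, by omega⟩

/-- For `n ≥ 6` with `p = (2n−1)(2n+1)` squarefree and `p ≡ 3 (mod 4)` (so the ring of
integers of `ℚ(√p)` is `ℤ[√p]`), the real quadratic field `ℚ(√p)` has exactly one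
indecomposable element of `𝓞⁺` up to multiplication by totally positive units, namely `1`:
`1` is indecomposable, and every indecomposable element is a totally positive unit
(so is `1` times a totally positive unit). -/
theorem stmt_17 (n : ℕ) (hn : 6 ≤ n)
    (hsf : Squarefree ((2*n-1)*(2*n+1))) (hmod : ((2*n-1)*(2*n+1)) % 4 = 3)
    (S : ℝ) (hS : S = Real.sqrt (((2*n-1)*(2*n+1) : ℕ) : ℝ)) :
    QuadIndec S 1 0 ∧
    ∀ x y : ℤ, QuadIndec S x y →
      ∃ x' y' : ℤ, ((x : ℝ) + (y : ℝ) * S) * ((x' : ℝ) + (y' : ℝ) * S) = 1 ∧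
        QuadTotPos S x' y' := by
  set P : ℕ := (2*n-1)*(2*n+1) with hP
  have hPZ : ((P : ℕ) : ℤ) = 4 * (n : ℤ) ^ 2 - 1 := by
    have h1 : 1 ≤ 2 * n := by omega
    push_cast [hP, Nat.cast_sub h1]
    ring
  have hPbig : 2 ≤ P := by
    have h1 : 11 ≤ 2 * n - 1 := by omega
    have h2 : 13 ≤ 2 * n + 1 := by omega
    have := Nat.mul_le_mul h1 h2
    omega
  have hPpos : 0 < P := by omega
  have hnotsq : ¬ IsSquare P := by
    rintro ⟨m, hm⟩
    have hd : m * m ∣ P := hm ▸ dvd_refl P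
    have hu := hsf m hd
    rw [Nat.isUnit_iff] at hu
    rw [hu, mul_one] at hm
    omega
  have hirr : Irrational S := by
    rw [hS]
    exact irrational_sqrt_natCast_iff.mpr hnotsq
  have hSpos : 0 < S := by
    rw [hS]
    apply Real.sqrt_pos.mpr
    exact_mod_cast hPpos
  have hS2 : S ^ 2 = ((4 * (n : ℤ) ^ 2 - 1 : ℤ) : ℝ) := by
    rw [hS, Real.sq_sqrt (by positivity)]
    rw [← hPZ]
    push_cast
    ring
  have hN : 2 ≤ (n : ℤ) := by omega
  have hkey := quad_key S (n : ℤ) hN hSpos hS2 hirr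
  constructor
  · -- 1 is indecomposable
    refine ⟨⟨by norm_num, by norm_num⟩, ?_⟩
    rintro ⟨a, b, c, d, ha, hc, hxe, hye⟩
    have hA := quad_totpos_x_pos ha
    have hC := quad_totpos_x_pos hc
    omega
  · intro x y hind
    have hnorm : x ^ 2 - (4 * (n : ℤ) ^ 2 - 1) * y ^ 2 = 1 := by
      rcases le_or_gt 0 y with hy | hy
      · have := hkey y.toNat x
        rw [Int.toNat_of_nonneg hy] at this
        exact this hind
      · have hind' := quad_indec_neg hind
        have := hkey (-y).toNat x
        rw [Int.toNat_of_nonneg (by omega : 0 ≤ -y)] at this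
        have h := this hind'
        linear_combination h
    refine ⟨x, -y, ?_, ?_, ?_⟩
    · have : ((x : ℝ) + (y : ℝ) * S) * ((x : ℝ) + ((-y : ℤ) : ℝ) * S)
          = (x : ℝ) ^ 2 - (y : ℝ) ^ 2 * S ^ 2 := by push_cast; ring
      rw [this, hS2]
      have : ((x ^ 2 - (4 * (n : ℤ) ^ 2 - 1) * y ^ 2 : ℤ) : ℝ) = 1 := by
        exact_mod_cast congrArg (fun z : ℤ => (z : ℝ)) hnorm
      push_cast at this ⊢
      linarith
    · push_cast
      have := hind.1.2
      linarith
    · push_cast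
      have := hind.1.1
      linarith
end

section
/- Let F be a totally real number field with Pythagoras number s = s(O_F), and let S be a finite set of representatives of the indecomposable elements of O_F^+ modulo multiplication by squares of units. Then the quadratic form Σ_{σ∈S} σ·(x_{1,σ}² + ... + x_{s,σ}²) over O_F is universal, i.e., represents every totally positive element of O_F. -/
open NumberField

/-- `x` is a sum of `s` squares in `R`. -/
def IsSumOfSquares' (R : Type*) [CommRing R] (s : ℕ) (x : R) : Prop :=
  ∃ g : Fin s → R, x = ∑ j, (g j) ^ 2

/-- Sums of squares are closed under addition. -/
lemma sos_add {R : Type*} [CommRing R] {x y : R}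
    (hx : ∃ m, IsSumOfSquares' R m x) (hy : ∃ m, IsSumOfSquares' R m y) :
    ∃ m, IsSumOfSquares' R m (x + y) := by
  obtain ⟨m₁, g, hg⟩ := hx
  obtain ⟨m₂, h, hh⟩ := hy
  refine ⟨m₁ + m₂, Fin.append g h, ?_⟩
  rw [Fin.sum_univ_add]
  simp only [Fin.append_left, Fin.append_right]
  rw [hg, hh]

/-- The trace of a totally positive integer is a positive rational integer. -/
lemma trace_pos_int (F : Type*) [Field F] [NumberField F]
    (htr : ∀ v : InfinitePlace F, v.IsReal)
    (γ : 𝓞 F) (hγ : TotallyPositive F γ) :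
    ∃ t : ℤ, 1 ≤ t ∧ (t : ℚ) = Algebra.trace ℚ F (γ : F) := by
  have hint : IsIntegral ℤ ((γ : F)) := RingOfIntegers.isIntegral_coe γ
  have htrace : IsIntegral ℤ (Algebra.trace ℚ F (γ : F)) := Algebra.isIntegral_trace hint
  obtain ⟨t, ht⟩ := IsIntegrallyClosed.isIntegral_iff.mp htrace
  have ht' : (t : ℚ) = Algebra.trace ℚ F (γ : F) := by
    rw [← ht]; simp
  refine ⟨t, ?_, ht'⟩
  -- positivity via sum over embeddings into ℂ
  have hsum : (algebraMap ℚ ℂ) (Algebra.trace ℚ F (γ : F)) = ∑ σ : F →ₐ[ℚ] ℂ, σ (γ : F) :=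
    trace_eq_sum_embeddings ℂ
  have hre : ∀ σ : F →ₐ[ℚ] ℂ, 0 < (σ (γ : F)).re ∧ (σ (γ : F)).im = 0 := by
    intro σ
    have hreal : ComplexEmbedding.IsReal (σ : F →+* ℂ) := by
      have := htr (InfinitePlace.mk (σ : F →+* ℂ))
      exact InfinitePlace.isReal_mk_iff.mp this
    have hemb := ComplexEmbedding.IsReal.coe_embedding_apply hreal (γ : F)
    have hpos := hγ hreal.embedding
    have hemb2 : ((hreal.embedding (γ : F) : ℝ) : ℂ) = σ (γ : F) := hemb
    constructor
    · rw [← hemb2, Complex.ofReal_re]; exact hpos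
    · rw [← hemb2]; exact Complex.ofReal_im _
  have hcard : 0 < Fintype.card (F →ₐ[ℚ] ℂ) := by
    rw [AlgHom.card]
    exact Module.finrank_pos
  have hne : (Finset.univ : Finset (F →ₐ[ℚ] ℂ)).Nonempty :=
    Finset.univ_nonempty_iff.mpr (Fintype.card_pos_iff.mp hcard)
  have hpos : 0 < ((algebraMap ℚ ℂ) (Algebra.trace ℚ F (γ : F))).re := by
    rw [hsum, Complex.re_sum]
    exact Finset.sum_pos (fun σ _ => (hre σ).1) hne
  have h0 : (0 : ℚ) < Algebra.trace ℚ F (γ : F) := by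
    rw [eq_ratCast (algebraMap ℚ ℂ)] at hpos
    simp only [Complex.ratCast_re] at hpos
    exact_mod_cast hpos
  rw [← ht'] at h0
  exact_mod_cast h0

/-- Every totally positive integer is a sum of indecomposables. -/
lemma mem_indec_closure (F : Type*) [Field F] [NumberField F]
    (htr : ∀ v : InfinitePlace F, v.IsReal)
    (γ : 𝓞 F) (hγ : TotallyPositive F γ) :
    γ ∈ AddSubmonoid.closure {α : 𝓞 F | Indecomposable F α} := by
  suffices H : ∀ n : ℕ, ∀ δ : 𝓞 F, TotallyPositive F δ →
      Algebra.trace ℚ F (δ : F) ≤ n → δ ∈ AddSubmonoid.closure {α : 𝓞 F | Indecomposable F α} by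
    obtain ⟨t, ht1, ht2⟩ := trace_pos_int F htr γ hγ
    refine H t.toNat γ hγ ?_
    rw [← ht2]
    exact_mod_cast Int.self_le_toNat t
  intro n
  induction n with
  | zero =>
    intro δ hδ hle
    obtain ⟨t, ht1, ht2⟩ := trace_pos_int F htr δ hδ
    exfalso
    rw [← ht2] at hle
    have : (1 : ℚ) ≤ (t : ℚ) := by exact_mod_cast ht1
    simp at hle
    linarith
  | succ n ih =>
    intro δ hδ hle
    by_cases hind : Indecomposable F δ
    · exact AddSubmonoid.subset_closure hind
    · have : ∃ β ε : 𝓞 F, TotallyPositive F β ∧ TotallyPositive F ε ∧ δ = β + ε := by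
        by_contra hno
        exact hind ⟨hδ, hno⟩
      obtain ⟨β, ε, hβ, hε, hδeq⟩ := this
      have hadd : Algebra.trace ℚ F (δ : F) =
          Algebra.trace ℚ F (β : F) + Algebra.trace ℚ F (ε : F) := by
        rw [hδeq]
        push_cast
        exact map_add _ _ _
      obtain ⟨tβ, htβ1, htβ2⟩ := trace_pos_int F htr β hβ
      obtain ⟨tε, htε1, htε2⟩ := trace_pos_int F htr ε hε
      have h1 : (1 : ℚ) ≤ Algebra.trace ℚ F (β : F) := by
        rw [← htβ2]; exact_mod_cast htβ1
      have h2 : (1 : ℚ) ≤ Algebra.trace ℚ F (ε : F) := by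
        rw [← htε2]; exact_mod_cast htε1
      have hβle : Algebra.trace ℚ F (β : F) ≤ n := by
        have : Algebra.trace ℚ F (β : F) + 1 ≤ (n : ℚ) + 1 := by
          push_cast at hle ⊢
          linarith [hadd ▸ hle]
        linarith
      have hεle : Algebra.trace ℚ F (ε : F) ≤ n := by
        have : Algebra.trace ℚ F (ε : F) + 1 ≤ (n : ℚ) + 1 := by
          push_cast at hle ⊢
          linarith [hadd ▸ hle]
        linarith
      rw [hδeq]
      exact AddSubmonoid.add_mem _ (ih β hβ hβle) (ih ε hε hεle)

/-- Let `F` be a totally real number field with Pythagoras number `s = s(𝓞 F)` (every sum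
of squares in `𝓞 F` is a sum of `s` squares, and `s` is least with this property), and let
`S` be a finite set of representatives of the indecomposable elements of `𝓞 F⁺` modulo
multiplication by squares of units. Then the quadratic form
`Σ_{σ ∈ S} σ·(x_{1,σ}² + … + x_{s,σ}²)` over `𝓞 F` is universal: it represents every
totally positive element of `𝓞 F`. -/
theorem stmt_18 (F : Type*) [Field F] [NumberField F]
    (htr : ∀ v : InfinitePlace F, v.IsReal)
    (s : ℕ)
    (hs : ∀ x : 𝓞 F, (∃ (m : ℕ), IsSumOfSquares' (𝓞 F) m x) → IsSumOfSquares' (𝓞 F) s x)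
    (hsmin : ∀ s' < s, ∃ x : 𝓞 F, (∃ (m : ℕ), IsSumOfSquares' (𝓞 F) m x) ∧
      ¬IsSumOfSquares' (𝓞 F) s' x)
    (S : Finset (𝓞 F))
    (hSind : ∀ σ ∈ S, Indecomposable F σ)
    (hSrep : ∀ α : 𝓞 F, Indecomposable F α →
      ∃ σ ∈ S, ∃ u : (𝓞 F)ˣ, α = (u : 𝓞 F) ^ 2 * σ) :
    ∀ γ : 𝓞 F, TotallyPositive F γ →
      ∃ x : 𝓞 F → Fin s → 𝓞 F, γ = ∑ σ ∈ S, σ * ∑ j, (x σ j) ^ 2 := by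
  intro γ hγ
  have hmem := mem_indec_closure F htr γ hγ
  -- first: γ = ∑ σ ∈ S, σ * c σ with each c σ a sum of squares
  have key : ∃ c : 𝓞 F → 𝓞 F, (∀ σ, ∃ m, IsSumOfSquares' (𝓞 F) m (c σ)) ∧
      γ = ∑ σ ∈ S, σ * c σ := by
    refine AddSubmonoid.closure_induction ?_ ?_ ?_ hmem
    · intro α hα
      obtain ⟨σ₀, hσ₀, u, hu⟩ := hSrep α hα
      classical
      refine ⟨fun σ => if σ = σ₀ then (u : 𝓞 F) ^ 2 else 0, ?_, ?_⟩
      · intro σ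
        by_cases h : σ = σ₀
        · refine ⟨1, fun _ => (u : 𝓞 F), ?_⟩
          simp [h]
        · exact ⟨0, fun j => 0, by simp [h]⟩
      · rw [hu]
        rw [Finset.sum_congr rfl (fun σ _ => by
          rw [mul_ite, mul_zero])]
        rw [Finset.sum_ite_eq' S σ₀ (fun σ => σ * (u : 𝓞 F) ^ 2)]
        simp [hσ₀, mul_comm]
    · exact ⟨fun _ => 0, fun σ => ⟨0, fun j => 0, by simp⟩, by simp⟩
    · rintro x y - - ⟨cx, hcx, hx⟩ ⟨cy, hcy, hy⟩
      refine ⟨fun σ => cx σ + cy σ, fun σ => sos_add (hcx σ) (hcy σ), ?_⟩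
      rw [hx, hy, ← Finset.sum_add_distrib]
      exact Finset.sum_congr rfl (fun σ _ => by ring)
  obtain ⟨c, hc, hγeq⟩ := key
  choose g hg using fun σ => hs (c σ) (hc σ)
  refine ⟨g, ?_⟩
  rw [hγeq]
  exact Finset.sum_congr rfl (fun σ _ => by rw [← hg σ])
end
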